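/- arXiv:2103.01540 — 3 statements merged into one kernel-verified Lean document; each statement's English description precedes it below -/
import Mathlib

section
/- The star chromatic index of the triangular prism (the Cartesian product K3 □ K2, equivalently the graph on vertices u, v, a, b, c, d with edges uv, ua, ub, vc, vd, ab, bc, cd, da) equals 6. -/
open SimpleGraph

/-- A star edge coloring of `G`: a proper edge coloring (edges sharing a vertex get
distinct colors) such that every path with 4 edges and every cycle with 4 edges
uses at least 3 colors. -/
def IsStarEdgeColoring {V : Type*} (G : SimpleGraph V) (c : Sym2 V → ℕ) : Prop :=
  (∀ e₁ ∈ G.edgeSet, ∀ e₂ ∈ G.edgeSet, e₁ ≠ e₂ → (∃ x, x ∈ e₁ ∧ x ∈ e₂) → c e₁ ≠ c e₂) ∧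
  (∀ v : Fin 5 → V, Function.Injective v →
      (∀ i : Fin 4, G.Adj (v i.castSucc) (v i.succ)) →
      3 ≤ (Finset.univ.image fun i : Fin 4 => c s(v i.castSucc, v i.succ)).card) ∧
  (∀ v : Fin 4 → V, Function.Injective v →
      (∀ i : Fin 4, G.Adj (v i) (v (i + 1))) →
      3 ≤ (Finset.univ.image fun i : Fin 4 => c s(v i, v (i + 1))).card)

/-- The star chromatic index: least `k` such that `G` has a star edge coloring
with colors in `{0, …, k-1}`. -/
noncomputable def starChromaticIndex {V : Type*} (G : SimpleGraph V) : ℕ :=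
  sInf {k | ∃ c : Sym2 V → ℕ, (∀ e ∈ G.edgeSet, c e < k) ∧ IsStarEdgeColoring G c}

/-- A subset of `ZMod n` is an arc (a set of cyclically consecutive elements). -/
def IsArc (n : ℕ) (S : Set (ZMod n)) : Prop :=
  ∃ (a : ZMod n) (m : ℕ), S = (fun j : ℕ => a + (j : ZMod n)) '' {j | j < m}

/-- The cycle graph on the points `σ 0, σ 1, …, σ (n-1)` (in this cyclic order). -/
def cycleOn {V : Type*} (n : ℕ) (σ : ZMod n → V) : SimpleGraph V :=
  SimpleGraph.fromEdgeSet {e | ∃ i : ZMod n, e = s(σ i, σ (i + 1))}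

/-- `G = T ∪ C` is a Halin graph: `T` is a tree with at least one non-leaf vertex,
every vertex of `T` has degree 1 or at least 3, `C` is a cycle whose vertex set is
exactly the leaf set of `T`, the edge set of `G` is the disjoint union of the edge
sets of `T` and `C`, and for every edge `e` of `T` the leaves lying in each
connected component of `T - e` form a contiguous arc of `C`. -/
structure IsHalin {V : Type*} (G T C : SimpleGraph V) : Prop where
  tree : T.IsTree
  degrees : ∀ v, (T.neighborSet v).ncard = 1 ∨ 3 ≤ (T.neighborSet v).ncard
  nonleaf : ∃ v, (T.neighborSet v).ncard ≠ 1
  cyc : ∃ (n : ℕ) (σ : ZMod n → V), 3 ≤ n ∧ Function.Injective σ ∧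
      Set.range σ = {v | (T.neighborSet v).ncard = 1} ∧
      C = cycleOn n σ ∧
      ∀ e ∈ T.edgeSet, ∀ K : (T.deleteEdges {e}).ConnectedComponent,
        IsArc n {i | σ i ∈ K.supp}
  disj : Disjoint T.edgeSet C.edgeSet
  union : G = T ⊔ C

/-- The triangular prism `K₃ □ K₂`, on vertices `u = 0`, `v = 1`, `a = 2`, `b = 3`,
`c = 4`, `d = 5`, with edges `uv, ua, ub, vc, vd, ab, bc, cd, da`. -/
def triangularPrism : SimpleGraph (Fin 6) :=
  SimpleGraph.fromEdgeSet
    {s(0, 1), s(0, 2), s(0, 3), s(1, 4), s(1, 5), s(2, 3), s(3, 4), s(4, 5), s(5, 2)}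

/-!
A colouring with six colours is exhibited and checked. For the lower bound, in a star edge
colouring the edges of any two colours form paths with at most three edges, and in such a linear
forest every inner vertex has a neighbour that is an end, different inner vertices having different
ones; hence the two-coloured subgraph has at most `3/4` as many edges as non-isolated vertices.
On six vertices two colour classes therefore have at most four edges together, and exactly four
only if they cover all six vertices. Nine edges in five colour classes then force four classes of
two edges whose uncovered vertex pairs are pairwise disjoint, which six vertices cannot host.
-/

open Finset

section StarEdgeColoring

variable {V : Type*} {G : SimpleGraph V} {c : Sym2 V → ℕ}

theorem three_le_card_insert_iff {α : Type*} [DecidableEq α] {a b c d : α} (hab : a ≠ b)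
    (hbc : b ≠ c) (hcd : c ≠ d) : 3 ≤ #({a, b, c, d} : Finset α) ↔ ¬(a = c ∧ b = d) := by
  refine ⟨?_, fun h => two_lt_card_iff.2 ?_⟩
  · rintro h ⟨rfl, rfl⟩
    have hab' : ({a, b, a, b} : Finset α) = {a, b} := by ext; simp
    rw [hab'] at h
    exact absurd card_le_two (not_le.2 h)
  · by_cases hac : a = c
    · exact ⟨b, c, d, by simp, by simp, by simp, hbc, fun hbd => h ⟨hac, hbd⟩, hcd⟩
    · exact ⟨a, b, c, by simp, by simp, by simp, hab, hac, hbc⟩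

theorem image_univ_fin_four {α : Type*} [DecidableEq α] (f : Fin 4 → α) :
    univ.image f = {f 0, f 1, f 2, f 3} := by
  simp [Fin.univ_succ, Finset.image_insert]

def IsProperEdgeColoring (G : SimpleGraph V) (c : Sym2 V → ℕ) : Prop :=
  ∀ e₁ ∈ G.edgeSet, ∀ e₂ ∈ G.edgeSet, e₁ ≠ e₂ → (∃ x, x ∈ e₁ ∧ x ∈ e₂) → c e₁ ≠ c e₂

theorem IsStarEdgeColoring.isProperEdgeColoring (hc : IsStarEdgeColoring G c) :
    IsProperEdgeColoring G c :=
  hc.1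

theorem IsProperEdgeColoring.color_ne (hc : IsProperEdgeColoring G c) {x y z : V}
    (hxy : G.Adj x y) (hxz : G.Adj x z) (hyz : y ≠ z) : c s(x, y) ≠ c s(x, z) :=
  hc _ hxy _ hxz (fun h => hyz (Sym2.congr_right.1 h))
    ⟨x, Sym2.mem_mk_left _ _, Sym2.mem_mk_left _ _⟩

theorem IsProperEdgeColoring.color_ne_of_adj_of_adj (hc : IsProperEdgeColoring G c) {x y z : V}
    (hxy : G.Adj x y) (hyz : G.Adj y z) (hxz : x ≠ z) : c s(x, y) ≠ c s(y, z) := by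
  rw [Sym2.eq_swap]
  exact hc.color_ne hxy.symm hyz hxz

theorem IsStarEdgeColoring.not_bicolored_path (hc : IsStarEdgeColoring G c) {x₀ x₁ x₂ x₃ x₄ : V}
    (h01 : G.Adj x₀ x₁) (h12 : G.Adj x₁ x₂) (h23 : G.Adj x₂ x₃) (h34 : G.Adj x₃ x₄)
    (h02 : x₀ ≠ x₂) (h03 : x₀ ≠ x₃) (h04 : x₀ ≠ x₄) (h13 : x₁ ≠ x₃) (h14 : x₁ ≠ x₄)
    (h24 : x₂ ≠ x₄) : ¬(c s(x₀, x₁) = c s(x₂, x₃) ∧ c s(x₁, x₂) = c s(x₃, x₄)) := by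
  have hinj : Function.Injective ![x₀, x₁, x₂, x₃, x₄] := by
    have := h01.ne; have := h12.ne; have := h23.ne; have := h34.ne
    intro i j hij
    fin_cases i <;> fin_cases j <;> simp_all [eq_comm]
  have h3 := hc.2.1 ![x₀, x₁, x₂, x₃, x₄] hinj (by intro i; fin_cases i <;> assumption)
  rw [image_univ_fin_four] at h3
  have hp := hc.isProperEdgeColoring
  exact (three_le_card_insert_iff (hp.color_ne_of_adj_of_adj h01 h12 h02)
    (hp.color_ne_of_adj_of_adj h12 h23 h13) (hp.color_ne_of_adj_of_adj h23 h34 h24)).1 h3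

theorem IsStarEdgeColoring.not_bicolored_cycle (hc : IsStarEdgeColoring G c) {x₀ x₁ x₂ x₃ : V}
    (h01 : G.Adj x₀ x₁) (h12 : G.Adj x₁ x₂) (h23 : G.Adj x₂ x₃) (h30 : G.Adj x₃ x₀)
    (h02 : x₀ ≠ x₂) (h13 : x₁ ≠ x₃) :
    ¬(c s(x₀, x₁) = c s(x₂, x₃) ∧ c s(x₁, x₂) = c s(x₃, x₀)) := by
  have hinj : Function.Injective ![x₀, x₁, x₂, x₃] := by
    have := h01.ne; have := h12.ne; have := h23.ne; have := h30.ne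
    intro i j hij
    fin_cases i <;> fin_cases j <;> simp_all [eq_comm]
  have h3 := hc.2.2 ![x₀, x₁, x₂, x₃] hinj (by intro i; fin_cases i <;> assumption)
  rw [image_univ_fin_four] at h3
  have hp := hc.isProperEdgeColoring
  exact (three_le_card_insert_iff (hp.color_ne_of_adj_of_adj h01 h12 h02)
    (hp.color_ne_of_adj_of_adj h12 h23 h13) (hp.color_ne_of_adj_of_adj h23 h30 h02.symm)).1 h3

theorem IsStarEdgeColoring.of_not_bicolored (hc : IsProperEdgeColoring G c)
    (hpath : ∀ x₀ x₁ x₂ x₃ x₄, G.Adj x₀ x₁ → G.Adj x₁ x₂ → G.Adj x₂ x₃ → G.Adj x₃ x₄ →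
      x₀ ≠ x₂ → x₀ ≠ x₃ → x₀ ≠ x₄ → x₁ ≠ x₃ → x₁ ≠ x₄ → x₂ ≠ x₄ →
      ¬(c s(x₀, x₁) = c s(x₂, x₃) ∧ c s(x₁, x₂) = c s(x₃, x₄)))
    (hcycle : ∀ x₀ x₁ x₂ x₃, G.Adj x₀ x₁ → G.Adj x₁ x₂ → G.Adj x₂ x₃ → G.Adj x₃ x₀ →
      x₀ ≠ x₂ → x₁ ≠ x₃ → ¬(c s(x₀, x₁) = c s(x₂, x₃) ∧ c s(x₁, x₂) = c s(x₃, x₀))) :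
    IsStarEdgeColoring G c := by
  refine ⟨hc, fun v hv hadj => ?_, fun v hv hadj => ?_⟩ <;> rw [image_univ_fin_four] <;>
    refine (three_le_card_insert_iff (hc.color_ne_of_adj_of_adj (hadj 0) (hadj 1)
      (hv.ne (by decide))) (hc.color_ne_of_adj_of_adj (hadj 1) (hadj 2) (hv.ne (by decide)))
      (hc.color_ne_of_adj_of_adj (hadj 2) (hadj 3) (hv.ne (by decide)))).2 ?_
  · exact hpath _ _ _ _ _ (hadj 0) (hadj 1) (hadj 2) (hadj 3) (hv.ne (by decide))
      (hv.ne (by decide)) (hv.ne (by decide)) (hv.ne (by decide)) (hv.ne (by decide))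
      (hv.ne (by decide))
  · exact hcycle _ _ _ _ (hadj 0) (hadj 1) (hadj 2) (hadj 3) (hv.ne (by decide))
      (hv.ne (by decide))

theorem starChromaticIndex_eq_succ {k : ℕ}
    (hc : ∃ c, (∀ e ∈ G.edgeSet, c e < k + 1) ∧ IsStarEdgeColoring G c)
    (h : ∀ c, (∀ e ∈ G.edgeSet, c e < k) → ¬IsStarEdgeColoring G c) :
    starChromaticIndex G = k + 1 := by
  refine le_antisymm (Nat.sInf_le hc) (le_csInf ⟨k + 1, hc⟩ ?_)
  rintro m ⟨c, hcm, hstar⟩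
  by_contra! hm
  exact h c (fun e he => (hcm e he).trans_le (by omega)) hstar

end StarEdgeColoring

section ColorSubgraph

variable {V : Type*} {G : SimpleGraph V} {c : Sym2 V → ℕ}

def colorSubgraph (G : SimpleGraph V) (c : Sym2 V → ℕ) (S : Finset ℕ) : SimpleGraph V where
  Adj x y := G.Adj x y ∧ c s(x, y) ∈ S
  symm := ⟨fun x _ h => ⟨h.1.symm, Sym2.eq_swap (a := x) ▸ h.2⟩⟩
  loopless := ⟨fun x h => G.loopless.irrefl x h.1⟩

instance [DecidableRel G.Adj] (S : Finset ℕ) : DecidableRel (colorSubgraph G c S).Adj :=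
  fun x y => inferInstanceAs (Decidable (G.Adj x y ∧ c s(x, y) ∈ S))

theorem eq_of_mem_of_card_le_two {α : Type*} {S : Finset α} {a b d : α} (ha : a ∈ S) (hb : b ∈ S) (hd : d ∈ S)
    (hS : #S ≤ 2) (hab : a ≠ b) (hbd : b ≠ d) : a = d := by
  by_contra had
  exact absurd (two_lt_card_iff.2 ⟨a, b, d, ha, hb, hd, hab, had, hbd⟩) (not_lt.2 hS)

/-- A walk `x₀ x₁ x₂ x₃ x₄` in a subgraph of two colours that never turns back would be a
bicoloured path or `4`-cycle. -/
theorem IsStarEdgeColoring.not_colorSubgraph_walk {S : Finset ℕ} (hc : IsStarEdgeColoring G c)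
    (hS : #S ≤ 2) {x₀ x₁ x₂ x₃ x₄ : V} (h01 : (colorSubgraph G c S).Adj x₀ x₁)
    (h12 : (colorSubgraph G c S).Adj x₁ x₂) (h23 : (colorSubgraph G c S).Adj x₂ x₃)
    (h34 : (colorSubgraph G c S).Adj x₃ x₄) (h02 : x₀ ≠ x₂) (h13 : x₁ ≠ x₃) (h24 : x₂ ≠ x₄) :
    False := by
  have hp := hc.isProperEdgeColoring
  have hc02 : c s(x₀, x₁) = c s(x₂, x₃) := eq_of_mem_of_card_le_two h01.2 h12.2 h23.2 hS
    (hp.color_ne_of_adj_of_adj h01.1 h12.1 h02) (hp.color_ne_of_adj_of_adj h12.1 h23.1 h13)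
  have hc13 : c s(x₁, x₂) = c s(x₃, x₄) := eq_of_mem_of_card_le_two h12.2 h23.2 h34.2 hS
    (hp.color_ne_of_adj_of_adj h12.1 h23.1 h13) (hp.color_ne_of_adj_of_adj h23.1 h34.1 h24)
  have h03 : x₀ ≠ x₃ := by
    rintro rfl
    exact hp.color_ne h01.1 h23.1.symm (G.ne_of_adj h12.1) (hc02.trans (by rw [Sym2.eq_swap]))
  have h14 : x₁ ≠ x₄ := by
    rintro rfl
    exact hp.color_ne h12.1 h34.1.symm (G.ne_of_adj h23.1) (hc13.trans (by rw [Sym2.eq_swap]))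
  by_cases h04 : x₀ = x₄
  · subst h04
    exact hc.not_bicolored_cycle h01.1 h12.1 h23.1 h34.1 h02 h13 ⟨hc02, hc13⟩
  · exact hc.not_bicolored_path h01.1 h12.1 h23.1 h34.1 h02 h03 h04 h13 h14 h24 ⟨hc02, hc13⟩

section Finite

variable [Fintype V]

theorem SimpleGraph.two_mul_card_edgeFinset_of_degree_le_two (H : SimpleGraph V)
    [DecidableRel H.Adj] (h : ∀ x, H.degree x ≤ 2) :
    2 * #H.edgeFinset = #{x | H.degree x = 1} + 2 * #{x | H.degree x = 2} := by
  rw [← sum_degrees_eq_twice_card_edges, card_filter, card_filter, mul_sum, ← sum_add_distrib]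
  refine sum_congr rfl fun x _ => ?_
  have := h x
  interval_cases H.degree x <;> rfl

theorem SimpleGraph.card_degree_pos_of_degree_le_two (H : SimpleGraph V) [DecidableRel H.Adj]
    (h : ∀ x, H.degree x ≤ 2) :
    #{x | 0 < H.degree x} = #{x | H.degree x = 1} + #{x | H.degree x = 2} := by
  rw [card_filter, card_filter, card_filter, ← sum_add_distrib]
  refine sum_congr rfl fun x _ => ?_
  have := h x
  interval_cases H.degree x <;> rfl

/-- Sending each vertex of degree `2` to a neighbour of degree `1` is injective, so there are at
most as many vertices of degree `2` as of degree `1`. -/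
theorem SimpleGraph.four_mul_card_edgeFinset_le (H : SimpleGraph V)
    [DecidableRel H.Adj] (hdeg : ∀ x, H.degree x ≤ 2)
    (hleaf : ∀ x, H.degree x = 2 → ∃ y, H.Adj x y ∧ H.degree y = 1) :
    4 * #H.edgeFinset ≤ 3 * #{x | 0 < H.degree x} := by
  choose! f hf using hleaf
  have hcard : #{x | H.degree x = 2} ≤ #{x | H.degree x = 1} := by
    refine card_le_card_of_injOn f (fun x hx => ?_) fun x hx x' hx' hxx' => ?_
    · simp only [coe_filter, mem_univ, true_and] at hx ⊢
      exact (hf x hx).2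
    simp only [coe_filter, mem_univ, true_and] at hx hx'
    have hone : #(H.neighborFinset (f x)) ≤ 1 := by
      rw [card_neighborFinset_eq_degree, (hf x hx).2]
    exact card_le_one.1 hone x (by simpa using (hf x hx).1.symm) x'
      (by simpa [hxx'] using (hf x' hx').1.symm)
  have := H.two_mul_card_edgeFinset_of_degree_le_two hdeg
  have := H.card_degree_pos_of_degree_le_two hdeg
  omega

variable [DecidableRel G.Adj]

theorem edgeFinset_colorSubgraph (S : Finset ℕ) :
    (colorSubgraph G c S).edgeFinset = {e ∈ G.edgeFinset | c e ∈ S} := by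
  ext e
  induction e using Sym2.ind
  simp only [mem_edgeFinset, mem_filter, mem_edgeSet]
  rfl

theorem sum_card_edgeFinset_colorSubgraph_singleton {k : ℕ} (hk : ∀ e ∈ G.edgeSet, c e < k) :
    ∑ i ∈ range k, #(colorSubgraph G c {i}).edgeFinset = #G.edgeFinset := by
  simp only [edgeFinset_colorSubgraph, mem_singleton]
  exact (card_eq_sum_card_fiberwise fun e he => mem_range.2 (hk e (mem_edgeFinset.1 he))).symm

def colorSupport (G : SimpleGraph V) [DecidableRel G.Adj] (c : Sym2 V → ℕ) (S : Finset ℕ) :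
    Finset V :=
  {x | 0 < (colorSubgraph G c S).degree x}

theorem mem_colorSupport {S : Finset ℕ} {x : V} :
    x ∈ colorSupport G c S ↔ ∃ y, G.Adj x y ∧ c s(x, y) ∈ S := by
  rw [colorSupport, mem_filter, degree_pos_iff_exists_adj]
  simp [colorSubgraph]

theorem IsProperEdgeColoring.degree_colorSubgraph_le (hc : IsProperEdgeColoring G c)
    (S : Finset ℕ) (x : V) : (colorSubgraph G c S).degree x ≤ #S := by
  rw [← card_neighborFinset_eq_degree]
  refine card_le_card_of_injOn (fun y => c s(x, y))
    (fun y hy => ((mem_neighborFinset _ _ _).1 hy).2) fun y hy z hz hyz => ?_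
  by_contra hne
  exact hc.color_ne ((mem_neighborFinset _ _ _).1 hy).1 ((mem_neighborFinset _ _ _).1 hz).1 hne hyz

theorem IsProperEdgeColoring.card_colorSupport_singleton (hc : IsProperEdgeColoring G c) (i : ℕ) :
    #(colorSupport G c {i}) = 2 * #(colorSubgraph G c {i}).edgeFinset := by
  have hdeg x : (colorSubgraph G c {i}).degree x ≤ 1 := hc.degree_colorSubgraph_le {i} x
  have hdeg2 x : (colorSubgraph G c {i}).degree x ≤ 2 := (hdeg x).trans one_le_two
  have hnone : #{x | (colorSubgraph G c {i}).degree x = 2} = 0 := by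
    simp only [card_eq_zero, filter_eq_empty_iff, mem_univ, true_implies]
    exact fun x => by have := hdeg x; omega
  rw [colorSupport, card_degree_pos_of_degree_le_two _ hdeg2,
    two_mul_card_edgeFinset_of_degree_le_two _ hdeg2]
  omega

variable [DecidableEq V]

theorem card_edgeFinset_colorSubgraph_pair {i j : ℕ} (hij : i ≠ j) :
    #(colorSubgraph G c {i, j}).edgeFinset =
      #(colorSubgraph G c {i}).edgeFinset + #(colorSubgraph G c {j}).edgeFinset := by
  simp only [edgeFinset_colorSubgraph, mem_insert, mem_singleton, filter_or]
  exact card_union_of_disjoint (disjoint_filter.2 fun _ _ hi hj => hij (hi.symm.trans hj))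

theorem colorSupport_pair (i j : ℕ) :
    colorSupport G c {i} ∪ colorSupport G c {j} = colorSupport G c {i, j} := by
  ext x
  simp only [mem_union, mem_colorSupport, mem_insert, mem_singleton, and_or_left, exists_or]

theorem IsStarEdgeColoring.exists_adj_degree_colorSubgraph_eq_one {S : Finset ℕ}
    (hc : IsStarEdgeColoring G c) (hS : #S ≤ 2) {x : V} (hx : (colorSubgraph G c S).degree x = 2) :
    ∃ y, (colorSubgraph G c S).Adj x y ∧ (colorSubgraph G c S).degree y = 1 := by
  by_contra! h
  have hnext y (hy : (colorSubgraph G c S).Adj x y) :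
      ∃ z, (colorSubgraph G c S).Adj y z ∧ z ≠ x := by
    have hpos : 0 < (colorSubgraph G c S).degree y :=
      ((colorSubgraph G c S).degree_pos_iff_exists_adj y).2 ⟨x, hy.symm⟩
    have hlt : 1 < #((colorSubgraph G c S).neighborFinset y) := by
      rw [card_neighborFinset_eq_degree]
      exact lt_of_le_of_ne hpos (h y hy).symm
    obtain ⟨z, hz, hzx⟩ := exists_mem_ne hlt x
    exact ⟨z, (mem_neighborFinset _ y z).1 hz, hzx⟩
  obtain ⟨y, z, hyz, hxyz⟩ := card_eq_two.1 ((card_neighborFinset_eq_degree _ x).trans hx)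
  have hy : (colorSubgraph G c S).Adj x y := (mem_neighborFinset _ x y).1 (by simp [hxyz])
  have hz : (colorSubgraph G c S).Adj x z := (mem_neighborFinset _ x z).1 (by simp [hxyz])
  obtain ⟨y', hyy', hy'x⟩ := hnext y hy
  obtain ⟨z', hzz', hz'x⟩ := hnext z hz
  exact hc.not_colorSubgraph_walk hS hyy'.symm hy.symm hz hzz' hy'x hyz hz'x.symm

theorem IsStarEdgeColoring.four_mul_card_edgeFinset_colorSubgraph_le {S : Finset ℕ}
    (hc : IsStarEdgeColoring G c) (hS : #S ≤ 2) :
    4 * #(colorSubgraph G c S).edgeFinset ≤ 3 * #(colorSupport G c S) :=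
  four_mul_card_edgeFinset_le _
    (fun x => (hc.isProperEdgeColoring.degree_colorSubgraph_le S x).trans hS)
    fun _ => hc.exists_adj_degree_colorSubgraph_eq_one hS

end Finite

end ColorSubgraph

theorem four_le_card_filter_eq_two {s : ℕ → ℕ} (hs : 9 ≤ ∑ i ∈ range 5, s i)
    (hle : ∀ i ∈ range 5, s i ≤ 3)
    (hpair : ∀ i ∈ range 5, ∀ j ∈ range 5, i ≠ j → s i + s j ≤ 4) :
    4 ≤ #{i ∈ range 5 | s i = 2} := by
  have hle_two : ∀ i ∈ range 5, s i ≤ 2 := by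
    intro i hi
    by_contra! h3
    have hrest : ∑ j ∈ (range 5).erase i, s j ≤ ∑ j ∈ (range 5).erase i, 1 :=
      sum_le_sum fun j hj => by
        have := hpair i hi j (mem_of_mem_erase hj) (ne_of_mem_erase hj).symm
        omega
    rw [sum_const, card_erase_of_mem hi, card_range, smul_eq_mul, mul_one] at hrest
    have := add_sum_erase (range 5) s hi
    have := hle i hi
    omega
  have hin : ∑ i ∈ range 5 with s i = 2, s i = 2 * #{i ∈ range 5 | s i = 2} := by
    rw [sum_congr rfl fun i hi => (mem_filter.1 hi).2, sum_const, smul_eq_mul, mul_comm]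
  have hout : ∑ i ∈ range 5 with ¬s i = 2, s i ≤ ∑ i ∈ range 5 with ¬s i = 2, 1 :=
    sum_le_sum fun i hi => by
      have := hle_two i (mem_filter.1 hi).1
      have := (mem_filter.1 hi).2
      omega
  rw [sum_const, smul_eq_mul, mul_one] at hout
  have := sum_filter_add_sum_filter_not (range 5) (fun i => s i = 2) s
  have := card_filter_add_card_filter_not (s := range 5) (fun i => s i = 2)
  rw [card_range] at this
  omega

/-- Otherwise at least four `s i` equal `2`, and the complements of those `A i` would be four
pairwise disjoint pairs in a `6`-element set. -/
theorem exists_three_mul_card_union_lt {α : Type*} [Fintype α] [DecidableEq α]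
    (hα : Fintype.card α = 6) (A : ℕ → Finset α) (s : ℕ → ℕ) (hA : ∀ i, #(A i) = 2 * s i)
    (hs : 9 ≤ ∑ i ∈ range 5, s i) :
    ∃ i ∈ range 5, ∃ j ∈ range 5, i ≠ j ∧ 3 * #(A i ∪ A j) < 4 * (s i + s j) := by
  by_contra! hpair
  have hcard i : #(A i) ≤ 6 := hα ▸ card_le_univ _
  have hunion i j : #(A i ∪ A j) ≤ 6 := hα ▸ card_le_univ _
  have hT := four_le_card_filter_eq_two hs (fun i _ => by have := hA i; have := hcard i; omega)
    fun i hi j hj hij => by have := hpair i hi j hj hij; have := hunion i j; omega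
  set T := {i ∈ range 5 | s i = 2}
  have hdisj : (T : Set ℕ).PairwiseDisjoint fun i => (A i)ᶜ := by
    intro i hi j hj hij
    simp only [T, coe_filter, Set.mem_ofPred_eq] at hi hj
    have hfull : A i ∪ A j = univ := by
      refine eq_univ_of_card _ (le_antisymm (card_le_univ _) ?_)
      have := hpair i hi.1 j hj.1 hij
      rw [hi.2, hj.2] at this
      omega
    simp only [Function.onFun, disjoint_iff, ← compl_sup, sup_eq_union, hfull, compl_univ,
      bot_eq_empty]
  have hcompl : ∑ i ∈ T, #(A i)ᶜ = 2 * #T := by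
    rw [sum_congr rfl fun i hi => by rw [card_compl, hα, hA, (mem_filter.1 hi).2], sum_const,
      smul_eq_mul, mul_comm]
  have := card_biUnion hdisj
  have := hα ▸ card_le_univ (T.biUnion fun i => (A i)ᶜ)
  omega

section SixVertices

variable {V : Type*} [Fintype V] [DecidableEq V] {G : SimpleGraph V} [DecidableRel G.Adj]
  {c : Sym2 V → ℕ}

theorem IsStarEdgeColoring.four_mul_le_three_mul_card_support (hc : IsStarEdgeColoring G c)
    {i j : ℕ} (hij : i ≠ j) :
    4 * (#(colorSubgraph G c {i}).edgeFinset + #(colorSubgraph G c {j}).edgeFinset) ≤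
      3 * #(colorSupport G c {i} ∪ colorSupport G c {j}) := by
  rw [← card_edgeFinset_colorSubgraph_pair hij, colorSupport_pair]
  exact hc.four_mul_card_edgeFinset_colorSubgraph_le card_le_two

theorem not_isStarEdgeColoring_of_card_eq_six (hV : Fintype.card V = 6)
    (hE : 9 ≤ #G.edgeFinset) (hc5 : ∀ e ∈ G.edgeSet, c e < 5) : ¬IsStarEdgeColoring G c := by
  intro hc
  obtain ⟨i, -, j, -, hij, hlt⟩ := exists_three_mul_card_union_lt hV _ _
    hc.isProperEdgeColoring.card_colorSupport_singleton
    ((sum_card_edgeFinset_colorSubgraph_singleton hc5).symm ▸ hE)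
  exact (hc.four_mul_le_three_mul_card_support hij).not_gt hlt

end SixVertices

theorem triangularPrism_adj {x y : Fin 6} : triangularPrism.Adj x y ↔ x ≠ y ∧
    s(x, y) ∈ ({s(0, 1), s(0, 2), s(0, 3), s(1, 4), s(1, 5), s(2, 3), s(3, 4), s(4, 5), s(5, 2)} :
      Finset (Sym2 (Fin 6))) := by
  simp [triangularPrism, and_comm]

instance : DecidableRel triangularPrism.Adj := fun _ _ => decidable_of_iff' _ triangularPrism_adj

theorem card_edgeFinset_triangularPrism : #triangularPrism.edgeFinset = 9 := by
  decide

/-- The triangles `uab` and `vcd` are both coloured `1, 2, 3` (in the same pattern), and the rungs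
`uv`, `bc`, `da` get `0, 4, 5`. -/
def prismColoring : Sym2 (Fin 6) → ℕ := fun e =>
  if e = s(0, 1) then 0 else if e = s(0, 2) then 1 else if e = s(0, 3) then 2
  else if e = s(1, 4) then 1 else if e = s(1, 5) then 2 else if e = s(2, 3) then 3
  else if e = s(3, 4) then 4 else if e = s(4, 5) then 3 else 5

theorem prismColoring_lt_six : ∀ e ∈ triangularPrism.edgeSet, prismColoring e < 6 := by
  decide

set_option synthInstance.maxSize 1000 in
theorem isStarEdgeColoring_prismColoring : IsStarEdgeColoring triangularPrism prismColoring := by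
  refine .of_not_bicolored ?_ ?_ ?_
  · unfold IsProperEdgeColoring
    decide
  · decide
  · decide

/-- The star chromatic index of the triangular prism equals 6. -/
theorem star_chromatic_index_triangular_prism :
    starChromaticIndex triangularPrism = 6 :=
  starChromaticIndex_eq_succ ⟨prismColoring, prismColoring_lt_six, isStarEdgeColoring_prismColoring⟩
    fun _ => not_isStarEdgeColoring_of_card_eq_six (Fintype.card_fin 6)
      card_edgeFinset_triangularPrism.ge
end

section
/- Every tree T with maximum degree Δ satisfies χ'_s(T) ≤ ⌊3Δ/2⌋, i.e., T admits a star edge coloring using at most ⌊3Δ/2⌋ colors. -/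
open SimpleGraph

/-!
Root the tree and colour the edge from each vertex to its parent greedily from the root down,
with `Δ + ⌊Δ/2⌋` colours. The two middle edges of a bicoloured path with four edges meet at a
vertex `w`; one goes down to a child `x`, the other goes up to the parent of `w` or down to a
second child `y`. Below `x` we allow the colour of the parent edge of `w` only when the colour of
`wx` is fresh, i.e. occurs on no edge at the parent of `w`, and the colour of `wy` only when `y`
lies in a cyclic window of the siblings following `x`, short enough that no two siblings lie in
each other's windows. This excludes both kinds of path, and counting the fresh colours and the
window shows that every vertex is still offered at least `Δ - 1` colours for its children.
-/

namespace SimpleGraph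

variable {V : Type*} {G : SimpleGraph V}

theorem IsAcyclic.eq_of_adj_of_adj (hG : G.IsAcyclic) {a b c d : V} (hab : G.Adj a b)
    (hbc : G.Adj b c) (had : G.Adj a d) (hdc : G.Adj d c) (hac : a ≠ c) : b = d := by
  have hp : (Walk.cons hab (Walk.cons hbc Walk.nil)).IsPath := by
    simp [Walk.cons_isPath_iff, hab.ne, hbc.ne, hac]
  have hq : (Walk.cons had (Walk.cons hdc Walk.nil)).IsPath := by
    simp [Walk.cons_isPath_iff, had.ne, hdc.ne, hac]
  have := (hG.subsingleton_path a c).elim ⟨_, hp⟩ ⟨_, hq⟩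
  exact congrArg (fun p : G.Path a c => p.1.snd) this

theorem one_le_ncard_neighborSet [Finite V] {a b : V} (hab : G.Adj a b) :
    1 ≤ (G.neighborSet a).ncard :=
  (Set.ncard_pos (Set.toFinite _)).mpr ⟨b, hab⟩

theorem isStarEdgeColoring_of_ncard_neighborSet_le_one [Finite V]
    (hG : ∀ v, (G.neighborSet v).ncard ≤ 1) (c : Sym2 V → ℕ) : IsStarEdgeColoring G c := by
  have hunique {v a b : V} (ha : G.Adj v a) (hb : G.Adj v b) : a = b :=
    (Set.ncard_le_one_iff (Set.toFinite _)).mp (hG v) ha hb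
  refine ⟨?_, fun v hv hadj => ?_, fun v hv hadj => ?_⟩
  · rintro e₁ he₁ e₂ he₂ hne ⟨x, hx₁, hx₂⟩
    obtain ⟨y₁, rfl⟩ := Sym2.mem_iff_exists.mp hx₁
    obtain ⟨y₂, rfl⟩ := Sym2.mem_iff_exists.mp hx₂
    obtain rfl := hunique (G.mem_edgeSet.mp he₁) (G.mem_edgeSet.mp he₂)
    exact absurd rfl hne
  · exact absurd (hv (hunique (hadj 0).symm (hadj 1))) (by decide)
  · exact absurd (hv (hunique (hadj 0).symm (hadj 1))) (by decide)

structure Rooting (G : SimpleGraph V) where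
  root : V
  parent : V → V
  depth : V → ℕ
  depth_parent : ∀ v, v ≠ root → depth v = depth (parent v) + 1
  adj_iff : ∀ a b, G.Adj a b ↔ (a ≠ root ∧ parent a = b) ∨ (b ≠ root ∧ parent b = a)

theorem IsTree.nonempty_rooting (hG : G.IsTree) : Nonempty G.Rooting := by
  classical
  obtain ⟨r⟩ := hG.connected.nonempty
  choose P hP hPuniq using fun v => hG.existsUnique_path v r
  have hroot : P r = Walk.nil := (hPuniq r _ Walk.IsPath.nil).symm
  have hnil {v : V} (hv : v ≠ r) : ¬ (P v).Nil := fun h => hv h.eq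
  have hparent {a b : V} (hab : G.Adj a b) : (P a).snd = b ∨ (P b).snd = a := by
    by_cases hpath : (Walk.cons hab (P b)).IsPath
    · exact .inl (by rw [← hPuniq a _ hpath, Walk.snd_cons])
    · have ha : a ∈ (P b).support := by
        by_contra ha
        exact hpath ((Walk.cons_isPath_iff hab _).mpr ⟨hP b, ha⟩)
      have hedge : (Walk.cons hab.symm Walk.nil : G.Walk b a).IsPath := by
        simp [Walk.cons_isPath_iff, hab.ne']
      have htake : (P b).takeUntil a ha = Walk.cons hab.symm Walk.nil :=
        (hG.existsUnique_path b a).unique ((hP b).takeUntil ha) hedge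
      have hspec := (P b).take_spec ha
      rw [htake, Walk.cons_nil_append] at hspec
      exact .inr (by rw [← hspec, Walk.snd_cons])
  refine ⟨⟨r, fun v => (P v).snd, fun v => (P v).length, fun v hv => ?_,
    fun a b => ⟨fun hab => ?_, ?_⟩⟩⟩
  · rw [← Walk.length_tail_add_one (hnil hv), hPuniq _ _ (hP v).tail]
  · have hne_root {x y : V} (hxy : (P x).snd = y) (hne : x ≠ y) : x ≠ r := by
      rintro rfl
      exact hne (by rw [← hxy, hroot]; rfl)
    rcases hparent hab with h | h
    · exact .inl ⟨hne_root h hab.ne, h⟩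
    · exact .inr ⟨hne_root h hab.ne', h⟩
  · rintro (⟨ha, rfl⟩ | ⟨hb, rfl⟩)
    · exact Walk.adj_snd (hnil ha)
    · exact (Walk.adj_snd (hnil hb)).symm

end SimpleGraph

theorem Finset.eq_and_eq_of_card_image_lt_three {α : Type*} [DecidableEq α] {f : Fin 4 → α}
    (h01 : f 0 ≠ f 1) (h12 : f 1 ≠ f 2) (h23 : f 2 ≠ f 3)
    (hcard : (Finset.univ.image f).card < 3) : f 2 = f 0 ∧ f 3 = f 1 := by
  have hmem (i : Fin 4) : f i ∈ Finset.univ.image f := Finset.mem_image_of_mem f (Finset.mem_univ i)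
  by_contra h
  refine hcard.not_ge (Finset.two_lt_card.mpr ?_)
  by_cases h20 : f 2 = f 0
  · exact ⟨f 0, hmem 0, f 1, hmem 1, f 3, hmem 3, h01, h20 ▸ h23, fun h31 => h ⟨h20, h31.symm⟩⟩
  · exact ⟨f 0, hmem 0, f 1, hmem 1, f 2, hmem 2, h01, Ne.symm h20, h12⟩

namespace SimpleGraph.Rooting

variable {V : Type*} {G : SimpleGraph V} (R : G.Rooting)

theorem adj_parent {v : V} (hv : v ≠ R.root) : G.Adj v (R.parent v) :=
  (R.adj_iff _ _).mpr (.inl ⟨hv, rfl⟩)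

theorem parent_parent_ne {v : V} (hv : v ≠ R.root) (hp : R.parent v ≠ R.root) :
    R.parent (R.parent v) ≠ v := by
  intro h
  have h₁ := R.depth_parent v hv
  have h₂ := R.depth_parent _ hp
  rw [h] at h₂
  omega

/-- An edge gets the colour of its endpoint farther from the root. -/
def edgeColor (c : V → ℕ) : Sym2 V → ℕ :=
  Sym2.lift ⟨fun a b => if R.depth a < R.depth b then c b else if R.depth b < R.depth a then c a
    else 0, fun a b => by dsimp only; split_ifs <;> first | rfl | omega⟩

theorem edgeColor_of_parent_eq (c : V → ℕ) {v u : V} (hv : v ≠ R.root) (hvu : R.parent v = u) :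
    R.edgeColor c s(u, v) = c v ∧ R.edgeColor c s(v, u) = c v := by
  have h := R.depth_parent v hv
  rw [hvu] at h
  constructor <;> simp only [edgeColor, Sym2.lift_mk] <;> split_ifs <;> first | rfl | omega

theorem edgeColor_lt {c : V → ℕ} {k : ℕ} (hc : ∀ v, v ≠ R.root → c v < k) {e : Sym2 V}
    (he : e ∈ G.edgeSet) : R.edgeColor c e < k := by
  induction e using Sym2.ind with
  | h a b =>
    rcases (R.adj_iff a b).mp he with ⟨ha, hab⟩ | ⟨hb, hba⟩
    · exact (R.edgeColor_of_parent_eq c ha hab).2 ▸ hc a ha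
    · exact (R.edgeColor_of_parent_eq c hb hba).1 ▸ hc b hb

/-- Conditions on the colours `c v` of the edges from each `v` to its parent: properness
(`sibling`, `parent`), and no bicoloured path with four edges, whose middle vertex has among its
two path neighbours either its parent (`up`) or two children (`across`). -/
structure IsStarColoring (c : V → ℕ) : Prop where
  sibling : ∀ ⦃x y⦄, x ≠ R.root → y ≠ R.root → x ≠ y → R.parent x = R.parent y → c x ≠ c y
  parent : ∀ ⦃x⦄, x ≠ R.root → R.parent x ≠ R.root → c x ≠ c (R.parent x)
  up : ∀ ⦃z x w g⦄, z ≠ R.root → R.parent z = x → x ≠ R.root → R.parent x = w →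
    w ≠ R.root → R.parent w = g →
    ((∃ u, u ≠ R.root ∧ R.parent u = g ∧ u ≠ w ∧ c u = c x) ∨ (g ≠ R.root ∧ c g = c x)) →
    c z ≠ c w
  across : ∀ ⦃x y x' y'⦄, x ≠ R.root → y ≠ R.root → x ≠ y → R.parent x = R.parent y →
    x' ≠ R.root → R.parent x' = x → y' ≠ R.root → R.parent y' = y → c x' = c y → c y' ≠ c x

variable {R} {c : V → ℕ}

theorem IsStarColoring.edgeColor_ne (hc : R.IsStarColoring c) {x a b : V} (ha : G.Adj x a)
    (hb : G.Adj x b) (hab : a ≠ b) : R.edgeColor c s(x, a) ≠ R.edgeColor c s(x, b) := by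
  rcases (R.adj_iff x a).mp ha with ⟨hx, hxa⟩ | ⟨ha, hax⟩ <;>
    rcases (R.adj_iff x b).mp hb with ⟨hx, hxb⟩ | ⟨hb, hbx⟩
  · exact absurd (hxa.symm.trans hxb) hab
  · rw [(R.edgeColor_of_parent_eq c hx hxa).2, (R.edgeColor_of_parent_eq c hb hbx).1]
    have h := hc.parent hb (by rwa [hbx])
    rw [hbx] at h
    exact h.symm
  · rw [(R.edgeColor_of_parent_eq c ha hax).1, (R.edgeColor_of_parent_eq c hx hxb).2]
    have h := hc.parent ha (by rwa [hax])
    rwa [hax] at h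
  · rw [(R.edgeColor_of_parent_eq c ha hax).1, (R.edgeColor_of_parent_eq c hb hbx).1]
    exact hc.sibling ha hb hab (hax.trans hbx.symm)

theorem IsStarColoring.not_bicolored_of_parent_eq (hc : R.IsStarColoring c) {a b w d e : V}
    (hab : G.Adj a b) (hwd : G.Adj w d) (hde : G.Adj d e) (hb : b ≠ R.root)
    (hbw : R.parent b = w) (haw : a ≠ w) (hbd : b ≠ d) (hwe : w ≠ e)
    (h₁ : R.edgeColor c s(a, b) = R.edgeColor c s(w, d))
    (h₂ : R.edgeColor c s(b, w) = R.edgeColor c s(d, e)) : False := by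
  obtain ⟨ha, hab⟩ : a ≠ R.root ∧ R.parent a = b := by
    rcases (R.adj_iff a b).mp hab with h | ⟨-, hba⟩
    · exact h
    · exact absurd (hba.symm.trans hbw) haw
  rw [(R.edgeColor_of_parent_eq c ha hab).2, (R.edgeColor_of_parent_eq c hb hbw).2] at *
  rcases (R.adj_iff w d).mp hwd with ⟨hw, hwd⟩ | ⟨hd, hdw⟩
  · rw [(R.edgeColor_of_parent_eq c hw hwd).2] at h₁
    refine hc.up ha hab hb hbw hw hwd ?_ h₁
    rcases (R.adj_iff d e).mp hde with ⟨hd, hde⟩ | ⟨he, hed⟩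
    · exact .inr ⟨hd, by rw [h₂, (R.edgeColor_of_parent_eq c hd hde).2]⟩
    · exact .inl ⟨e, he, hed, hwe.symm, by rw [h₂, (R.edgeColor_of_parent_eq c he hed).1]⟩
  · rw [(R.edgeColor_of_parent_eq c hd hdw).1] at h₁
    obtain ⟨he, hed⟩ : e ≠ R.root ∧ R.parent e = d := by
      rcases (R.adj_iff d e).mp hde with ⟨-, hde⟩ | h
      · exact absurd (hdw.symm.trans hde) hwe
      · exact h
    rw [(R.edgeColor_of_parent_eq c he hed).1] at h₂
    exact hc.across hb hd hbd (hbw.trans hdw.symm) ha hab he hed h₁ h₂.symm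

theorem IsStarColoring.isStarEdgeColoring (hG : G.IsAcyclic) (hc : R.IsStarColoring c) :
    IsStarEdgeColoring G (R.edgeColor c) := by
  refine ⟨?_, fun v hv hadj => ?_, fun v hv hadj => ?_⟩
  · rintro e₁ he₁ e₂ he₂ hne ⟨x, hx₁, hx₂⟩
    obtain ⟨y₁, rfl⟩ := Sym2.mem_iff_exists.mp hx₁
    obtain ⟨y₂, rfl⟩ := Sym2.mem_iff_exists.mp hx₂
    exact hc.edgeColor_ne he₁ he₂ fun h => hne (by rw [h])
  · have hne (i j : Fin 5) (hij : i ≠ j) : v i ≠ v j := hv.ne hij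
    have h01 : G.Adj (v 0) (v 1) := hadj 0
    have h12 : G.Adj (v 1) (v 2) := hadj 1
    have h23 : G.Adj (v 2) (v 3) := hadj 2
    have h34 : G.Adj (v 3) (v 4) := hadj 3
    have hconsec {x y z : V} (hxy : G.Adj x y) (hyz : G.Adj y z) (hxz : x ≠ z) :
        R.edgeColor c s(x, y) ≠ R.edgeColor c s(y, z) := by
      rw [Sym2.eq_swap]
      exact hc.edgeColor_ne hxy.symm hyz hxz
    by_contra! hcard
    obtain ⟨h₁, h₂⟩ : R.edgeColor c s(v 2, v 3) = R.edgeColor c s(v 0, v 1) ∧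
        R.edgeColor c s(v 3, v 4) = R.edgeColor c s(v 1, v 2) :=
      Finset.eq_and_eq_of_card_image_lt_three (hconsec h01 h12 (hne 0 2 (by decide)))
        (hconsec h12 h23 (hne 1 3 (by decide))) (hconsec h23 h34 (hne 2 4 (by decide))) hcard
    rcases (R.adj_iff (v 1) (v 2)).mp h12 with ⟨h1, h12⟩ | ⟨h2, h21⟩
    · exact hc.not_bicolored_of_parent_eq h01 h23 h34 h1 h12 (hne 0 2 (by decide))
        (hne 1 3 (by decide)) (hne 2 4 (by decide)) h₁.symm h₂.symm
    · obtain ⟨h3, h32⟩ : v 3 ≠ R.root ∧ R.parent (v 3) = v 2 := by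
        rcases (R.adj_iff (v 2) (v 3)).mp h23 with ⟨-, h23⟩ | h
        · exact absurd (h21.symm.trans h23) (hne 1 3 (by decide))
        · exact h
      refine hc.not_bicolored_of_parent_eq h34.symm h12.symm h01.symm h3 h32
        (hne 4 2 (by decide)) (hne 3 1 (by decide)) (hne 2 0 (by decide)) ?_ ?_
      · rw [Sym2.eq_swap, h₂, Sym2.eq_swap]
      · rw [Sym2.eq_swap, h₁, Sym2.eq_swap]
  · have h13 := hG.eq_of_adj_of_adj (hadj 0) (hadj 1) (hadj 3).symm (hadj 2).symm
      (hv.ne (by decide : (0 : Fin 4) ≠ 2))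
    exact absurd (hv h13) (by decide)

end SimpleGraph.Rooting

namespace TreeStarColoring

theorem mod_eq_or_mod_add_eq {n s : ℕ} (h : n < 2 * s) : n % s = n ∨ n % s + s = n := by
  rcases lt_or_ge n s with h' | h'
  · exact .inl (Nat.mod_eq_of_lt h')
  · right
    rw [Nat.mod_eq_sub_mod h', Nat.mod_eq_of_lt (by omega)]
    omega

theorem add_one_add_mod_ne {i j s : ℕ} (hi : i < s) (hj : j + 1 < s) : (i + 1 + j) % s ≠ i := by
  rcases mod_eq_or_mod_add_eq (n := i + 1 + j) (s := s) (by omega) with h | h <;> omega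

theorem eq_of_add_one_add_mod_eq {i j j' s : ℕ} (hi : i < s) (hj : j < s) (hj' : j' < s)
    (h : (i + 1 + j) % s = (i + 1 + j') % s) : j = j' := by
  rcases mod_eq_or_mod_add_eq (n := i + 1 + j) (s := s) (by omega) with h₁ | h₁ <;>
    rcases mod_eq_or_mod_add_eq (n := i + 1 + j') (s := s) (by omega) with h₂ | h₂ <;> omega

/-- Child `i` of a vertex with `s` children may reuse the colours of the next
`windowSize Δ f i s` siblings in cyclic order; `f` is the number of fresh colours of the
vertex, and the children from position `f` on get one more. -/
def windowSize (Δ f i s : ℕ) : ℕ := s + (if f ≤ i then 1 else 0) - (Δ / 2 + 1)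

theorem windowSize_lt {Δ f i s : ℕ} (hΔ : 2 ≤ Δ) (hi : i < s) : windowSize Δ f i s < s := by
  unfold windowSize
  split_ifs <;> omega

/-- Windows are never mutual: two such windows would together wrap around all `s` siblings,
which the bounds on `s` and `f` rule out. -/
theorem window_antisymm {Δ f s i j a b : ℕ} (hi : i < s) (hj : j < s)
    (ha : a < windowSize Δ f i s) (hb : b < windowSize Δ f j s)
    (hij : (i + 1 + a) % s = j) (hji : (j + 1 + b) % s = i)
    (hdeg : s + 1 ≤ Δ ∨ s ≤ Δ ∧ s ≤ f) (hf : s ≤ f + Δ / 2) : False := by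
  unfold windowSize at ha hb
  have ha' : a < s := by split_ifs at ha <;> omega
  have hb' : b < s := by split_ifs at hb <;> omega
  rcases mod_eq_or_mod_add_eq (n := i + 1 + a) (s := s) (by omega) with h₁ | h₁ <;>
    rcases mod_eq_or_mod_add_eq (n := j + 1 + b) (s := s) (by omega) with h₂ | h₂ <;>
    split_ifs at ha hb <;> omega

/-- What the greedy colouring records at a vertex: the colour of the edge to its parent, and
the list of colours offered to the edges to its children (the `i`-th child takes the `i`-th
entry), which starts with `numFresh` colours occurring on no edge at the parent. -/
structure Label where
  color : ℕ
  numFresh : ℕ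
  palette : List ℕ

/-- The root has no parent edge; its colour `Δ + Δ / 2` lies outside the palette. -/
def Label.root (Δ : ℕ) : Label := ⟨Δ + Δ / 2, Δ + Δ / 2, List.range (Δ + Δ / 2)⟩

def freshColors (Δ : ℕ) (p : Label) (atRoot : Bool) (s : ℕ) : List ℕ :=
  (List.range (Δ + Δ / 2)).filter fun a => a ∉ p.palette.take s ++ if atRoot then [] else [p.color]

def windowColors (Δ : ℕ) (p : Label) (i s : ℕ) : List ℕ :=
  (List.range (windowSize Δ p.numFresh i s)).map fun j => p.palette.getD ((i + 1 + j) % s) 0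

def bonusColors (p : Label) (atRoot : Bool) (i : ℕ) : List ℕ :=
  if atRoot = false ∧ i < p.numFresh then [p.color] else []

/-- The label of the `i`-th of the `s` children of a vertex with label `p`; `atRoot` says
whether that vertex is the root. Its palette consists of the fresh colours, the colours of the
siblings in its window and, if its own colour is fresh, the colour of the parent edge of `p`. -/
def Label.child (Δ : ℕ) (p : Label) (atRoot : Bool) (i s : ℕ) : Label where
  color := p.palette.getD i 0
  numFresh := (freshColors Δ p atRoot s).length
  palette := freshColors Δ p atRoot s ++ (windowColors Δ p i s ++ bonusColors p atRoot i)

structure Label.IsValid (Δ : ℕ) (L : Label) (s : ℕ) : Prop where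
  nodup : L.palette.Nodup
  lt : ∀ a ∈ L.palette, a < Δ + Δ / 2
  color_not_mem : L.color ∉ L.palette
  le_length : s ≤ L.palette.length
  le_numFresh : s ≤ L.numFresh + Δ / 2

theorem Label.root_isValid {Δ s : ℕ} (hs : s ≤ Δ) : (Label.root Δ).IsValid Δ s :=
  ⟨List.nodup_range, fun _ => List.mem_range.mp, by simp [Label.root],
    by simp only [Label.root, List.length_range]; omega, by simp only [Label.root]; omega⟩

theorem getD_mem_take {l : List ℕ} {k s : ℕ} (hk : k < s) (hkl : k < l.length) :
    l.getD k 0 ∈ l.take s := by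
  rw [List.getD_eq_getElem _ _ hkl, ← List.getElem_take (j := s)]
  · exact List.getElem_mem _
  · rw [List.length_take]
    exact lt_min hk hkl

variable {Δ : ℕ} {p : Label} {atRoot : Bool} {i s : ℕ}

theorem mem_freshColors {a : ℕ} :
    a ∈ freshColors Δ p atRoot s ↔
      a < Δ + Δ / 2 ∧ a ∉ p.palette.take s ∧ (atRoot = true ∨ a ≠ p.color) := by
  cases atRoot <;> simp [freshColors]

theorem mem_windowColors {a : ℕ} :
    a ∈ windowColors Δ p i s ↔
      ∃ j < windowSize Δ p.numFresh i s, p.palette.getD ((i + 1 + j) % s) 0 = a := by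
  simp [windowColors]

theorem mem_bonusColors {a : ℕ} :
    a ∈ bonusColors p atRoot i ↔ atRoot = false ∧ i < p.numFresh ∧ a = p.color := by
  unfold bonusColors
  split_ifs with h <;> simp_all

theorem mem_child_palette {a : ℕ} :
    a ∈ (p.child Δ atRoot i s).palette ↔
      a ∈ freshColors Δ p atRoot s ∨ a ∈ windowColors Δ p i s ∨ a ∈ bonusColors p atRoot i := by
  simp [Label.child]

theorem windowColors_subset (hi : i < s) (hs : s ≤ p.palette.length) {a : ℕ}
    (ha : a ∈ windowColors Δ p i s) : a ∈ p.palette.take s := by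
  obtain ⟨j, -, rfl⟩ := mem_windowColors.mp ha
  have := Nat.mod_lt (i + 1 + j) (by omega : 0 < s)
  exact getD_mem_take this (by omega)

theorem getD_injective {l : List ℕ} (hl : l.Nodup) {j k : ℕ} (hj : j < l.length)
    (hk : k < l.length) (h : l.getD j 0 = l.getD k 0) : j = k := by
  rw [List.getD_eq_getElem _ _ hj, List.getD_eq_getElem _ _ hk] at h
  exact (hl.getElem_inj_iff).mp h

theorem windowColors_nodup (hΔ : 2 ≤ Δ) (hnd : p.palette.Nodup) (hi : i < s)
    (hs : s ≤ p.palette.length) : (windowColors Δ p i s).Nodup := by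
  have hw := windowSize_lt (f := p.numFresh) hΔ hi
  refine List.nodup_range.map_on fun j hj k hk h => ?_
  rw [List.mem_range] at hj hk
  exact eq_of_add_one_add_mod_eq hi (by omega) (by omega)
    (getD_injective hnd (by have := Nat.mod_lt (i + 1 + j) (by omega : 0 < s); omega)
      (by have := Nat.mod_lt (i + 1 + k) (by omega : 0 < s); omega) h)

theorem getD_not_mem_windowColors (hΔ : 2 ≤ Δ) (hnd : p.palette.Nodup) (hi : i < s)
    (hs : s ≤ p.palette.length) : p.palette.getD i 0 ∉ windowColors Δ p i s := by
  have hw := windowSize_lt (f := p.numFresh) hΔ hi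
  rw [mem_windowColors]
  rintro ⟨j, hj, h⟩
  exact add_one_add_mod_ne hi (by omega)
    (getD_injective hnd (by have := Nat.mod_lt (i + 1 + j) (by omega : 0 < s); omega)
      (by omega) h)

theorem le_length_freshColors (hs : s ≤ p.palette.length) :
    Δ + Δ / 2 ≤ (freshColors Δ p atRoot s).length + s + (if atRoot then 0 else 1) := by
  unfold freshColors
  set forbidden := p.palette.take s ++ if atRoot then [] else [p.color]
  have hsplit := List.length_eq_length_filter_add (l := List.range (Δ + Δ / 2))
    fun a => decide (a ∉ forbidden)
  have hle := ((List.nodup_range : (List.range (Δ + Δ / 2)).Nodup).filter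
    fun a => !decide (a ∉ forbidden)).length_le_of_subset
    (l₂ := forbidden) fun a ha => by simpa using (List.mem_filter.mp ha).2
  have hforbidden : forbidden.length = s + if atRoot then 0 else 1 := by
    cases atRoot <;> simp [forbidden, hs]
  rw [List.length_range] at hsplit
  omega

theorem child_palette_nodup (hΔ : 2 ≤ Δ) (hnd : p.palette.Nodup) (hc : p.color ∉ p.palette)
    (hi : i < s) (hs : s ≤ p.palette.length) : (p.child Δ atRoot i s).palette.Nodup := by
  simp only [Label.child, List.nodup_append]
  refine ⟨List.nodup_range.filter _, ⟨windowColors_nodup hΔ hnd hi hs, ?_, ?_⟩, ?_⟩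
  · unfold bonusColors; split_ifs <;> simp
  · rintro a ha b hb rfl
    obtain ⟨-, -, rfl⟩ := mem_bonusColors.mp hb
    exact hc (List.take_subset _ _ (windowColors_subset hi hs ha))
  · rintro a ha b hb rfl
    obtain ⟨-, hnot, hpc⟩ := mem_freshColors.mp ha
    rcases List.mem_append.mp hb with hb | hb
    · exact hnot (windowColors_subset hi hs hb)
    · obtain ⟨hr, -, rfl⟩ := mem_bonusColors.mp hb
      simp [hr] at hpc

theorem child_palette_lt (hlt : ∀ a ∈ p.palette, a < Δ + Δ / 2) (hi : i < s)
    (hs : s ≤ p.palette.length) (hpc : atRoot = false → p.color < Δ + Δ / 2) :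
    ∀ a ∈ (p.child Δ atRoot i s).palette, a < Δ + Δ / 2 := by
  intro a ha
  rcases mem_child_palette.mp ha with h | h | h
  · exact (mem_freshColors.mp h).1
  · exact hlt a (List.take_subset _ _ (windowColors_subset hi hs h))
  · obtain ⟨hr, -, rfl⟩ := mem_bonusColors.mp h
    exact hpc hr

theorem child_color_not_mem (hΔ : 2 ≤ Δ) (hnd : p.palette.Nodup) (hc : p.color ∉ p.palette)
    (hi : i < s) (hs : s ≤ p.palette.length) :
    (p.child Δ atRoot i s).color ∉ (p.child Δ atRoot i s).palette := by
  intro h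
  rcases mem_child_palette.mp h with h | h | h
  · exact (mem_freshColors.mp h).2.1 (getD_mem_take hi (by omega))
  · exact getD_not_mem_windowColors hΔ hnd hi hs h
  · obtain ⟨-, -, h⟩ := mem_bonusColors.mp h
    exact hc (h ▸ List.take_subset _ _ (getD_mem_take hi (by omega)))

theorem child_palette_length :
    (p.child Δ atRoot i s).palette.length = (p.child Δ atRoot i s).numFresh +
      windowSize Δ p.numFresh i s + (if atRoot = false ∧ i < p.numFresh then 1 else 0) := by
  simp only [Label.child, List.length_append, windowColors, List.length_map, List.length_range,
    bonusColors]
  split_ifs <;> simp [Nat.add_assoc]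

theorem take_numFresh_child_palette :
    (p.child Δ atRoot i s).palette.take (p.child Δ atRoot i s).numFresh =
      freshColors Δ p atRoot s :=
  List.take_left

theorem color_not_mem_child_palette (hc : p.color ∉ p.palette) (hi : i < s)
    (hs : s ≤ p.palette.length) (hr : atRoot = false) (hf : p.numFresh ≤ i) :
    p.color ∉ (p.child Δ atRoot i s).palette := by
  intro h
  rcases mem_child_palette.mp h with h | h | h
  · simp [mem_freshColors, hr] at h
  · exact hc (List.take_subset _ _ (windowColors_subset hi hs h))
  · obtain ⟨-, h, -⟩ := mem_bonusColors.mp h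
    omega

theorem exists_window_of_mem_child_palette (hc : p.color ∉ p.palette) {a : ℕ}
    (ha : a ∈ (p.child Δ atRoot i s).palette) (has : a ∈ p.palette.take s) :
    ∃ j < windowSize Δ p.numFresh i s, p.palette.getD ((i + 1 + j) % s) 0 = a := by
  rcases mem_child_palette.mp ha with h | h | h
  · exact absurd has (mem_freshColors.mp h).2.1
  · exact mem_windowColors.mp h
  · obtain ⟨-, -, rfl⟩ := mem_bonusColors.mp h
    exact absurd (List.take_subset _ _ has) hc

theorem Label.IsValid.child (hp : p.IsValid Δ s) (hΔ : 2 ≤ Δ) (hi : i < s)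
    (hpc : atRoot = false → p.color < Δ + Δ / 2) (hdeg : s + (if atRoot then 0 else 1) ≤ Δ)
    (hroot : atRoot = true → s ≤ p.numFresh) {s' : ℕ} (hs' : s' + 1 ≤ Δ) :
    (p.child Δ atRoot i s).IsValid Δ s' := by
  have hfresh : Δ + Δ / 2 ≤ (p.child Δ atRoot i s).numFresh + s + (if atRoot then 0 else 1) :=
    le_length_freshColors hp.le_length
  have hlen := child_palette_length (Δ := Δ) (p := p) (atRoot := atRoot) (i := i) (s := s)
  refine ⟨child_palette_nodup hΔ hp.nodup hp.color_not_mem hi hp.le_length,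
    child_palette_lt hp.lt hi hp.le_length hpc,
    child_color_not_mem hΔ hp.nodup hp.color_not_mem hi hp.le_length, ?_, ?_⟩ <;>
  · unfold windowSize at hlen
    cases atRoot <;> simp only [Bool.false_eq_true, Bool.true_eq_false, ↓reduceIte, true_and,
      false_and, add_zero, IsEmpty.forall_iff, forall_const] at hfresh hdeg hlen hroot <;>
      split_ifs at hlen <;> omega

end TreeStarColoring

namespace SimpleGraph.Rooting

open Finset TreeStarColoring

variable {V : Type*} {G : SimpleGraph V} (R : G.Rooting)

section Children

variable [Fintype V] [DecidableEq V]

def children (t : V) : Finset V := {x | x ≠ R.root ∧ R.parent x = t}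

variable {R} in
theorem mem_children {x t : V} : x ∈ R.children t ↔ x ≠ R.root ∧ R.parent x = t := by
  simp [children]

theorem card_children_add_le {Δ : ℕ} (hG : ∀ v, (G.neighborSet v).ncard ≤ Δ) (t : V) :
    #(R.children t) + (if t = R.root then 0 else 1) ≤ Δ := by
  have hle (S : Finset V) (hS : (S : Set V) ⊆ G.neighborSet t) : #S ≤ Δ :=
    Set.ncard_coe_finset S ▸ (Set.ncard_le_ncard hS (Set.toFinite _)).trans (hG t)
  have hsub : (R.children t : Set V) ⊆ G.neighborSet t := fun x hx => by
    obtain ⟨hroot, rfl⟩ := mem_children.mp hx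
    exact (R.adj_parent hroot).symm
  split_ifs with ht
  · simpa using hle _ hsub
  · have hnot : R.parent t ∉ R.children t := fun h =>
      R.parent_parent_ne ht (mem_children.mp h).1 (mem_children.mp h).2
    rw [← card_insert_of_notMem hnot]
    exact hle _ (by rw [coe_insert]; exact Set.insert_subset (R.adj_parent ht) hsub)

end Children

section Label

variable [Fintype V] [LinearOrder V]

def childIndex (v : V) : ℕ := #{u ∈ R.children (R.parent v) | u < v}

theorem childIndex_lt {v : V} (hv : v ≠ R.root) :
    R.childIndex v < #(R.children (R.parent v)) :=
  card_lt_card (filter_ssubset.mpr ⟨v, mem_children.mpr ⟨hv, rfl⟩, lt_irrefl v⟩)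

theorem childIndex_lt_childIndex {x y : V} (hx : x ≠ R.root) (hp : R.parent x = R.parent y)
    (hxy : x < y) : R.childIndex x < R.childIndex y := by
  unfold childIndex
  rw [hp]
  refine card_lt_card ⟨fun u hu => ?_, fun h => ?_⟩
  · rw [mem_filter] at hu ⊢
    exact ⟨hu.1, hu.2.trans hxy⟩
  · have := h (mem_filter.mpr ⟨mem_children.mpr ⟨hx, hp⟩, hxy⟩)
    exact lt_irrefl x (mem_filter.mp this).2

theorem childIndex_ne_childIndex {x y : V} (hx : x ≠ R.root) (hy : y ≠ R.root) (hxy : x ≠ y)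
    (hp : R.parent x = R.parent y) : R.childIndex x ≠ R.childIndex y := by
  rcases hxy.lt_or_gt with h | h
  · exact (R.childIndex_lt_childIndex hx hp h).ne
  · exact (R.childIndex_lt_childIndex hy hp.symm h).ne'

def label (Δ : ℕ) (v : V) : Label :=
  if h : v = R.root then Label.root Δ
  else
    have := R.depth_parent v h
    (label Δ (R.parent v)).child Δ (decide (R.parent v = R.root)) (R.childIndex v)
      #(R.children (R.parent v))
termination_by R.depth v

theorem label_root (Δ : ℕ) : R.label Δ R.root = Label.root Δ := by
  rw [label, dif_pos rfl]

theorem label_of_ne_root (Δ : ℕ) {v : V} (hv : v ≠ R.root) :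
    R.label Δ v = (R.label Δ (R.parent v)).child Δ (decide (R.parent v = R.root))
      (R.childIndex v) #(R.children (R.parent v)) := by
  rw [label, dif_neg hv]

theorem color_label_of_ne_root (Δ : ℕ) {v : V} (hv : v ≠ R.root) :
    (R.label Δ v).color = (R.label Δ (R.parent v)).palette.getD (R.childIndex v) 0 := by
  rw [R.label_of_ne_root Δ hv]
  rfl

variable {Δ : ℕ} (hΔ : 2 ≤ Δ) (hG : ∀ v, (G.neighborSet v).ncard ≤ Δ)
include hΔ hG

theorem label_isValid (v : V) :
    (R.label Δ v).IsValid Δ #(R.children v) ∧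
      (v ≠ R.root → (R.label Δ v).color < Δ + Δ / 2) := by
  have hdeg := R.card_children_add_le hG v
  by_cases hv : v = R.root
  · subst hv
    rw [label_root]
    exact ⟨Label.root_isValid (by simpa using hdeg), fun h => (h rfl).elim⟩
  have := R.depth_parent v hv
  obtain ⟨hp, hpc⟩ := label_isValid (R.parent v)
  have hi := R.childIndex_lt hv
  have hdeg' := R.card_children_add_le hG (R.parent v)
  rw [if_neg hv] at hdeg
  rw [R.label_of_ne_root Δ hv]
  refine ⟨hp.child hΔ hi (fun h => hpc (by simpa using h)) ?_ (fun h => ?_) hdeg, fun _ => ?_⟩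
  · by_cases h : R.parent v = R.root <;> simp_all
  · rw [decide_eq_true_iff.mp h, label_root] at hp ⊢
    rw [decide_eq_true_iff.mp h] at hdeg'
    simp only [Label.root, if_true] at hdeg' ⊢
    omega
  · show (R.label Δ (R.parent v)).palette.getD (R.childIndex v) 0 < _
    rw [List.getD_eq_getElem _ _ (hi.trans_le hp.le_length)]
    exact hp.lt _ (List.getElem_mem _)
termination_by R.depth v

theorem color_label_mem_take {v : V} (hv : v ≠ R.root) :
    (R.label Δ v).color ∈
      (R.label Δ (R.parent v)).palette.take #(R.children (R.parent v)) := by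
  rw [R.color_label_of_ne_root Δ hv]
  exact getD_mem_take (R.childIndex_lt hv)
    ((R.childIndex_lt hv).trans_le (R.label_isValid hΔ hG _).1.le_length)

theorem color_label_ne_of_sibling {x y : V} (hx : x ≠ R.root) (hy : y ≠ R.root) (hxy : x ≠ y)
    (hp : R.parent x = R.parent y) : (R.label Δ x).color ≠ (R.label Δ y).color := by
  have hvalid := (R.label_isValid hΔ hG (R.parent x)).1
  have hix := R.childIndex_lt hx
  have hiy := R.childIndex_lt hy
  rw [← hp] at hiy
  rw [R.color_label_of_ne_root Δ hx, R.color_label_of_ne_root Δ hy, ← hp]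
  exact fun h => R.childIndex_ne_childIndex hx hy hxy hp
    (getD_injective hvalid.nodup (hix.trans_le hvalid.le_length) (hiy.trans_le hvalid.le_length) h)

theorem color_label_ne_parent {x : V} (hx : x ≠ R.root) :
    (R.label Δ x).color ≠ (R.label Δ (R.parent x)).color := fun h =>
  (R.label_isValid hΔ hG (R.parent x)).1.color_not_mem
    (h ▸ List.take_subset _ _ (R.color_label_mem_take hΔ hG hx))

/-- If the colour of `x` already occurs at its grandparent `g`, it is not fresh at `w`, so no
child edge of `x` may take the colour of `w`. -/
theorem color_label_ne_of_up {z x w g : V} (hz : z ≠ R.root) (hzx : R.parent z = x)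
    (hx : x ≠ R.root) (hxw : R.parent x = w) (hw : w ≠ R.root) (hwg : R.parent w = g)
    (hcol : (∃ u, u ≠ R.root ∧ R.parent u = g ∧ u ≠ w ∧
        (R.label Δ u).color = (R.label Δ x).color) ∨
      (g ≠ R.root ∧ (R.label Δ g).color = (R.label Δ x).color)) :
    (R.label Δ z).color ≠ (R.label Δ w).color := by
  subst hxw hwg
  have hvalid := (R.label_isValid hΔ hG (R.parent x)).1
  have hstale : (R.label Δ (R.parent x)).numFresh ≤ R.childIndex x := by
    by_contra! hfresh
    have hmem : (R.label Δ x).color ∈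
        (R.label Δ (R.parent x)).palette.take (R.label Δ (R.parent x)).numFresh := by
      rw [R.color_label_of_ne_root Δ hx]
      exact getD_mem_take hfresh ((R.childIndex_lt hx).trans_le hvalid.le_length)
    rw [R.label_of_ne_root Δ hw, take_numFresh_child_palette, mem_freshColors] at hmem
    obtain ⟨-, hsib, hpar⟩ := hmem
    rcases hcol with ⟨u, hu, hug, -, hcu⟩ | ⟨hg, hcg⟩
    · exact hsib (hcu ▸ hug ▸ R.color_label_mem_take hΔ hG hu)
    · simp [hg, hcg] at hpar
  have hnot := color_not_mem_child_palette (Δ := Δ) (atRoot := decide (R.parent x = R.root))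
    hvalid.color_not_mem (R.childIndex_lt hx) hvalid.le_length (by simpa using hw) hstale
  rw [← R.label_of_ne_root Δ hx] at hnot
  exact fun h => hnot (h ▸ hzx ▸ List.take_subset _ _ (R.color_label_mem_take hΔ hG hz))

theorem exists_window_of_color_label_mem {x y : V} (hx : x ≠ R.root) (hy : y ≠ R.root)
    (hp : R.parent x = R.parent y) (hmem : (R.label Δ y).color ∈ (R.label Δ x).palette) :
    ∃ a < windowSize Δ (R.label Δ (R.parent x)).numFresh (R.childIndex x)
        #(R.children (R.parent x)),
      (R.childIndex x + 1 + a) % #(R.children (R.parent x)) = R.childIndex y := by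
  have hvalid := (R.label_isValid hΔ hG (R.parent x)).1
  have hiy := R.childIndex_lt hy
  rw [← hp] at hiy
  rw [R.label_of_ne_root Δ hx] at hmem
  obtain ⟨a, ha, h⟩ := exists_window_of_mem_child_palette hvalid.color_not_mem hmem
    (hp ▸ R.color_label_mem_take hΔ hG hy)
  rw [R.color_label_of_ne_root Δ hy, ← hp] at h
  have := Nat.mod_lt (R.childIndex x + 1 + a) ((R.childIndex_lt hx).trans_le' (Nat.zero_le _))
  exact ⟨a, ha, getD_injective hvalid.nodup (by have := hvalid.le_length; omega)
    (hiy.trans_le hvalid.le_length) h⟩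

theorem color_label_ne_of_across {x y x' y' : V} (hx : x ≠ R.root) (hy : y ≠ R.root)
    (hp : R.parent x = R.parent y) (hx' : x' ≠ R.root) (hx'x : R.parent x' = x)
    (hy' : y' ≠ R.root) (hy'y : R.parent y' = y)
    (h : (R.label Δ x').color = (R.label Δ y).color) :
    (R.label Δ y').color ≠ (R.label Δ x).color := by
  intro h'
  obtain ⟨a, ha, hia⟩ := R.exists_window_of_color_label_mem hΔ hG hx hy hp
    (h ▸ hx'x ▸ List.take_subset _ _ (R.color_label_mem_take hΔ hG hx'))
  obtain ⟨b, hb, hjb⟩ := R.exists_window_of_color_label_mem hΔ hG hy hx hp.symm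
    (h' ▸ hy'y ▸ List.take_subset _ _ (R.color_label_mem_take hΔ hG hy'))
  rw [← hp] at hb hjb
  have hi := R.childIndex_lt hy
  rw [← hp] at hi
  have hdeg := R.card_children_add_le hG (R.parent x)
  refine window_antisymm (R.childIndex_lt hx) hi ha hb hia hjb ?_
    (R.label_isValid hΔ hG (R.parent x)).1.le_numFresh
  by_cases ht : R.parent x = R.root
  · have hf : (R.label Δ (R.parent x)).numFresh = Δ + Δ / 2 := by rw [ht, label_root]; rfl
    rw [if_pos ht] at hdeg
    omega
  · rw [if_neg ht] at hdeg
    omega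

theorem isStarColoring_color_label : R.IsStarColoring fun v => (R.label Δ v).color where
  sibling _ _ hx hy hxy hp := R.color_label_ne_of_sibling hΔ hG hx hy hxy hp
  parent _ hx _ := R.color_label_ne_parent hΔ hG hx
  up _ _ _ _ hz hzx hx hxw hw hwg hcol := R.color_label_ne_of_up hΔ hG hz hzx hx hxw hw hwg hcol
  across _ _ _ _ hx hy _ hp hx' hx'x hy' hy'y h :=
    R.color_label_ne_of_across hΔ hG hx hy hp hx' hx'x hy' hy'y h

end Label

end SimpleGraph.Rooting

theorem star_chromatic_index_tree_general {V : Type*} [Fintype V]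
    (T : SimpleGraph V) (hT : T.IsTree) (Δ : ℕ)
    (hΔle : ∀ v : V, (T.neighborSet v).ncard ≤ Δ) :
    starChromaticIndex T ≤ 3 * Δ / 2 := by
  rcases lt_or_ge Δ 2 with hΔ | hΔ
  · refine Nat.sInf_le ⟨fun _ => 0, fun e he => ?_,
      isStarEdgeColoring_of_ncard_neighborSet_le_one (fun v => (hΔle v).trans (by omega)) _⟩
    induction e using Sym2.ind with
    | h a b =>
      have := (one_le_ncard_neighborSet he).trans (hΔle a)
      show 0 < 3 * Δ / 2
      omega
  · let _ : LinearOrder V := LinearOrder.lift' _ (Fintype.equivFin V).injective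
    obtain ⟨R⟩ := hT.nonempty_rooting
    refine Nat.sInf_le ⟨R.edgeColor fun v => (R.label Δ v).color, fun e he => ?_,
      (R.isStarColoring_color_label hΔ hΔle).isStarEdgeColoring hT.isAcyclic⟩
    have := R.edgeColor_lt (fun v hv => (R.label_isValid hΔ hΔle v).2 hv) he
    omega

/-- Every tree with maximum degree `Δ` has star chromatic index
at most `⌊3Δ/2⌋`. -/
theorem star_chromatic_index_tree {V : Type*} [Fintype V]
    (T : SimpleGraph V) (hT : T.IsTree) (Δ : ℕ)
    (hΔle : ∀ v : V, (T.neighborSet v).ncard ≤ Δ)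
    (hΔmax : ∃ v : V, (T.neighborSet v).ncard = Δ) :
    starChromaticIndex T ≤ 3 * Δ / 2 :=
  star_chromatic_index_tree_general T hT Δ hΔle
end

section
/- Let T be a tree with maximum degree Δ ≥ 1, rooted at a vertex r. Then there exists a star edge coloring φ of T using colors from {1, ..., ⌊3Δ/2⌋} such that for every non-root vertex v of T that is not a leaf, at least min(deg_T(v) − 1, ⌊Δ/2⌋) of the edges joining v to its children receive colors that do not appear on any edge incident to the parent of v. -/
open SimpleGraph

/-!
Root the tree and colour the child edges of each vertex top-down with `L = ⌊3Δ/2⌋` colours.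
At a vertex `p` with parent `g` at most `Δ` colours are seen at `g`, so at least
`L - deg g ≥ ⌊Δ/2⌋` colours are fresh. The last `min (deg p - 1) (L - deg g)` children of `p`,
in a fixed order, get distinct fresh colours; the others reuse colours present at `g`: the
colours of the edges `gs` to the siblings `s` that `p` beats in a cyclic tournament on the
children of `g`, and the colour of the edge above `g` when the edge `gp` was itself fresh. The
out-degrees of the tournament provide enough reusable colours. A bicoloured path with four
edges either climbs monotonically or turns once at its highest vertex, and each shape
contradicts freshness, properness at the turning vertex, or the antisymmetry of the tournament.
-/

namespace Finset

lemma nth_mem_of_lt_card {s : Finset ℕ} {i : ℕ} (h : i < #s) : Nat.nth (· ∈ s) i ∈ s :=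
  Nat.nth_mem_of_lt_card s.finite_toSet (by simpa using h)

lemma nth_injOn (s : Finset ℕ) : Set.InjOn (Nat.nth (· ∈ s)) (Set.Iio #s) := by
  simpa using Nat.nth_injOn s.finite_toSet

lemma three_le_card_image_fin_four {β : Type*} [DecidableEq β] {f : Fin 4 → β}
    (h01 : f 0 ≠ f 1) (h12 : f 1 ≠ f 2) (h23 : f 2 ≠ f 3) (h : ¬ (f 0 = f 2 ∧ f 1 = f 3)) :
    3 ≤ #(univ.image f) := by
  have hf : ∀ i, f i ∈ univ.image f := fun i => mem_image_of_mem f (mem_univ i)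
  rw [Nat.succ_le_iff, two_lt_card]
  by_cases h02 : f 0 = f 2
  · exact ⟨_, hf 0, _, hf 1, _, hf 3, h01, h02 ▸ h23, fun h13 => h ⟨h02, h13⟩⟩
  · exact ⟨_, hf 0, _, hf 1, _, hf 2, h01, h02, h12⟩

end Finset

section Rank

open Finset

variable {α β : Type*} [LinearOrder β] {f : α → β} {s : Finset α}

variable (f s) in
def rankIn (x : α) : ℕ := #{y ∈ s | f y < f x}

lemma rankIn_lt {x : α} (hx : x ∈ s) : rankIn f s x < #s :=
  card_lt_card (filter_ssubset.2 ⟨x, hx, lt_irrefl _⟩)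

lemma rankIn_injOn (hf : Set.InjOn f s) : Set.InjOn (rankIn f s) s := by
  have key : ∀ x ∈ s, ∀ y ∈ s, f x < f y → rankIn f s x < rankIn f s y := fun x hx y _ hxy =>
    card_lt_card <| (ssubset_iff_of_subset
      (monotone_filter_right _ fun _ _ h => h.trans hxy)).2 ⟨x, by simp [hx, hxy], by simp⟩
  intro x hx y hy hxy
  by_contra hne
  rcases (hf.ne hx hy hne).lt_or_gt with h | h
  · exact (key x hx y hy h).ne hxy
  · exact (key y hy x hx h).ne' hxy

lemma image_rankIn (hf : Set.InjOn f s) : s.image (rankIn f s) = range #s :=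
  eq_of_subset_of_card_le (image_subset_iff.2 fun _ hx => mem_range.2 (rankIn_lt hx))
    (by rw [card_range, card_image_of_injOn (rankIn_injOn hf)])

lemma card_filter_rankIn (hf : Set.InjOn f s) (P : ℕ → Prop) [DecidablePred P] :
    #{x ∈ s | P (rankIn f s x)} = #{j ∈ range #s | P j} := by
  rw [← image_rankIn hf, filter_image,
    card_image_of_injOn ((rankIn_injOn hf).mono (filter_subset _ _))]

end Rank

section CyclicTournament

open Finset

def cyclicGap (K i j : ℕ) : ℕ := if i ≤ j then j - i else j + K - i

/-- On `range K`, `i` beats the positions less than half-way round the cycle ahead of it and,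
when `K` is even, the first half also beats their antipodes. -/
def CyclicBeats (K i j : ℕ) : Prop :=
  1 ≤ cyclicGap K i j ∧ (2 * cyclicGap K i j < K ∨ 2 * cyclicGap K i j = K ∧ 2 * i < K)

instance (K i j : ℕ) : Decidable (CyclicBeats K i j) := by unfold CyclicBeats; infer_instance

lemma not_cyclicBeats_self (K i : ℕ) : ¬ CyclicBeats K i i := by simp [CyclicBeats, cyclicGap]

lemma CyclicBeats.not_cyclicBeats {K i j : ℕ} (h : CyclicBeats K i j) : ¬ CyclicBeats K j i := by
  unfold CyclicBeats cyclicGap at *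
  split_ifs at * <;> omega

lemma card_cyclicBeats {K i : ℕ} (hi : i < K) :
    #{j ∈ range K | CyclicBeats K i j} = if 2 * i < K then K / 2 else (K - 1) / 2 := by
  rw [← Nat.add_sub_cancel (if 2 * i < K then K / 2 else (K - 1) / 2) 1, ← Nat.card_Icc]
  refine card_nbij' (cyclicGap K i) (fun d => if i + d < K then i + d else i + d - K)
    ?_ ?_ ?_ ?_ <;> intro x hx <;>
    simp only [CyclicBeats, cyclicGap, mul_ite, coe_filter, mem_range, Set.mem_ofPred_eq, coe_Icc,
      Set.mem_Icc] at hx ⊢ <;>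
    split_ifs at hx ⊢ <;> omega

end CyclicTournament

/-- A rooted tree given by its parent map; `depth` certifies that iterating `parent` reaches
`root`, and `parent root` is irrelevant. -/
structure ParentTree (V : Type*) where
  parent : V → V
  root : V
  depth : V → ℕ
  depth_parent : ∀ v, v ≠ root → depth (parent v) + 1 = depth v

namespace ParentTree

open Finset

variable {V : Type*} [Fintype V] [DecidableEq V] (R : ParentTree V)

def children (p : V) : Finset V := {z | z ≠ R.root ∧ R.parent z = p}

def degree (p : V) : ℕ := #(R.children p) + if p = R.root then 0 else 1

def graph : SimpleGraph V := SimpleGraph.fromRel fun a b => a ∈ R.children b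

variable {R}

lemma mem_children {z p : V} : z ∈ R.children p ↔ z ≠ R.root ∧ R.parent z = p := by
  simp [children]

lemma self_mem_children {p : V} (hp : p ≠ R.root) : p ∈ R.children (R.parent p) :=
  mem_children.2 ⟨hp, rfl⟩

lemma depth_of_mem_children {z p : V} (h : z ∈ R.children p) : R.depth p + 1 = R.depth z := by
  obtain ⟨hz, rfl⟩ := mem_children.1 h
  exact R.depth_parent z hz

lemma eq_of_mem_children {z p q : V} (hp : z ∈ R.children p) (hq : z ∈ R.children q) : p = q :=
  (mem_children.1 hp).2.symm.trans (mem_children.1 hq).2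

lemma notMem_children_of_mem_children {a b : V} (h : a ∈ R.children b) : b ∉ R.children a :=
  fun h' => by have := depth_of_mem_children h; have := depth_of_mem_children h'; omega

lemma graph_adj {a b : V} : R.graph.Adj a b ↔ a ∈ R.children b ∨ b ∈ R.children a := by
  refine ⟨fun h => h.2, fun h => ⟨?_, h⟩⟩
  rintro rfl
  have := depth_of_mem_children (h.elim id id)
  omega

lemma mem_children_of_adj_of_depth_le {a b : V} (h : R.graph.Adj a b)
    (hd : R.depth b ≤ R.depth a) : a ∈ R.children b := by
  refine (graph_adj.1 h).resolve_right fun hb => ?_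
  have := depth_of_mem_children hb
  omega

lemma neighborSet_graph (v : V) :
    R.graph.neighborSet v = ↑(R.children v ∪ if v = R.root then ∅ else {R.parent v}) := by
  ext z
  simp only [SimpleGraph.mem_neighborSet, graph_adj, coe_union, Set.mem_union, mem_coe]
  split_ifs with hv
  · simp [mem_children, hv]
  · simp [mem_children, hv, eq_comm, or_comm]

lemma ncard_neighborSet_graph (v : V) : (R.graph.neighborSet v).ncard = R.degree v := by
  rw [neighborSet_graph, Set.ncard_coe_finset, degree]
  split_ifs with hv
  · simp
  · rw [card_union_of_disjoint (disjoint_singleton_right.2 fun h =>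
      notMem_children_of_mem_children h (self_mem_children hv)), card_singleton]

lemma not_adj_cycle_four {v : Fin 4 → V} (hv : Function.Injective v) :
    ¬ ∀ i : Fin 4, R.graph.Adj (v i) (v (i + 1)) := by
  intro hadj
  obtain ⟨i, -, hi⟩ := exists_max_image univ (fun j => R.depth (v j)) univ_nonempty
  have h₁ := mem_children_of_adj_of_depth_le (hadj i) (hi _ (mem_univ _))
  have h₀ := mem_children_of_adj_of_depth_le (sub_add_cancel i 1 ▸ hadj (i - 1)).symm
    (hi _ (mem_univ _))
  exact (by decide : ∀ i : Fin 4, i + 1 ≠ i - 1) i (hv (eq_of_mem_children h₁ h₀))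

end ParentTree

structure BoundedParentTree (V : Type*) [Fintype V] [DecidableEq V] extends ParentTree V where
  Δ : ℕ
  degree_le : ∀ v, toParentTree.degree v ≤ Δ

namespace BoundedParentTree

open Finset ParentTree

variable {V : Type*} [Fintype V] [DecidableEq V] (R : BoundedParentTree V)

def numColors : ℕ := 3 * R.Δ / 2

noncomputable def rank (z : V) : ℕ := rankIn (Fintype.equivFin V) (R.children (R.parent z)) z

def numReused (p : V) : ℕ := #(R.children p) - (R.numColors - R.degree (R.parent p))

def Beats (x y : V) : Prop := CyclicBeats #(R.children (R.parent x)) (R.rank x) (R.rank y)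

noncomputable instance (x y : V) : Decidable (R.Beats x y) := by unfold Beats; infer_instance

lemma depth_parent_lt {p : V} (hp : p ≠ R.root) : R.depth (R.parent p) < R.depth p := by
  have := R.depth_parent p hp
  omega

/-- `color p z` is the colour of the edge from `p` to its child `z`. -/
noncomputable def color (p : V) : V → ℕ :=
  if hp : p = R.root then fun z => Nat.nth (· ∈ Icc 1 R.numColors) (R.rank z)
  else fun z =>
    if R.numReused p ≤ R.rank z then
      Nat.nth (· ∈ Icc 1 R.numColors \
          ((R.children (R.parent p)).image (color (R.parent p)) ∪
            if _ : R.parent p = R.root then ∅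
            else {color (R.parent (R.parent p)) (R.parent p)}))
        (R.rank z - R.numReused p)
    else
      Nat.nth (· ∈ ({s ∈ R.children (R.parent p) | R.Beats p s}).image (color (R.parent p)) ∪
          if _ : R.parent p ≠ R.root ∧ R.numReused (R.parent p) ≤ R.rank p then
            {color (R.parent (R.parent p)) (R.parent p)}
          else ∅)
        (R.rank z)
termination_by R.depth p
decreasing_by
  all_goals first
    | exact R.depth_parent_lt hp
    | exact (R.depth_parent_lt ‹_›).trans (R.depth_parent_lt hp)
    | exact (R.depth_parent_lt ‹_ ∧ _›.1).trans (R.depth_parent_lt hp)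

noncomputable def colorsAt (g : V) : Finset ℕ :=
  (R.children g).image (R.color g) ∪ if g = R.root then ∅ else {R.color (R.parent g) g}

noncomputable def reusable (p : V) : Finset ℕ :=
  ({s ∈ R.children (R.parent p) | R.Beats p s}).image (R.color (R.parent p)) ∪
    if R.parent p ≠ R.root ∧ R.numReused (R.parent p) ≤ R.rank p then
      {R.color (R.parent (R.parent p)) (R.parent p)}
    else ∅

structure ProperAt (p : V) : Prop where
  colorsAt_subset : R.colorsAt p ⊆ Icc 1 R.numColors
  injOn : Set.InjOn (R.color p) (R.children p)
  color_ne_up : p ≠ R.root → ∀ z ∈ R.children p, R.color p z ≠ R.color (R.parent p) p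

noncomputable def edgeColor : Sym2 V → ℕ :=
  Sym2.lift ⟨fun a b => if b ∈ R.children a then R.color a b
    else if a ∈ R.children b then R.color b a else 0, fun a b => by
      dsimp only
      split_ifs with h₁ h₂ h₃ <;>
        first | rfl | exact absurd h₂ (notMem_children_of_mem_children h₁)⟩

lemma color_root (z : V) : R.color R.root z = Nat.nth (· ∈ Icc 1 R.numColors) (R.rank z) := by
  rw [color, dif_pos rfl]

lemma color_of_ne_root {p : V} (hp : p ≠ R.root) (z : V) :
    R.color p z =
      if R.numReused p ≤ R.rank z then
        Nat.nth (· ∈ Icc 1 R.numColors \ R.colorsAt (R.parent p)) (R.rank z - R.numReused p)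
      else Nat.nth (· ∈ R.reusable p) (R.rank z) := by
  rw [color, dif_neg hp]
  simp only [colorsAt, reusable, dite_eq_ite]

variable {R}

lemma rank_of_mem_children {z p : V} (hz : z ∈ R.children p) :
    R.rank z = rankIn (Fintype.equivFin V) (R.children p) z := by
  rw [rank, (mem_children.1 hz).2]

lemma rank_lt {z p : V} (hz : z ∈ R.children p) : R.rank z < #(R.children p) :=
  rank_of_mem_children hz ▸ rankIn_lt hz

lemma rank_injOn (p : V) : Set.InjOn R.rank (R.children p) := fun x hx y hy h =>
  rankIn_injOn (Fintype.equivFin V).injective.injOn hx hy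
    (by rwa [← rank_of_mem_children hx, ← rank_of_mem_children hy])

lemma card_filter_rank (p : V) (P : ℕ → Prop) [DecidablePred P] :
    #{z ∈ R.children p | P (R.rank z)} = #{j ∈ range #(R.children p) | P j} := by
  rw [← card_filter_rankIn (Fintype.equivFin V).injective.injOn P]
  exact congrArg card (filter_congr fun z hz => by rw [rank_of_mem_children hz])

lemma card_colorsAt_le (g : V) : #(R.colorsAt g) ≤ R.degree g := by
  refine (card_union_le _ _).trans (add_le_add card_image_le ?_)
  split_ifs <;> simp

lemma color_mem_colorsAt {g z : V} (hz : z ∈ R.children g) : R.color g z ∈ R.colorsAt g :=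
  mem_union_left _ (mem_image_of_mem _ hz)

lemma color_parent_mem_colorsAt {g : V} (hg : g ≠ R.root) :
    R.color (R.parent g) g ∈ R.colorsAt g :=
  mem_union_right _ (by simp [hg])

lemma reusable_subset_colorsAt (p : V) : R.reusable p ⊆ R.colorsAt (R.parent p) := by
  refine union_subset_union (image_subset_image (filter_subset _ _)) ?_
  split_ifs <;> simp_all

lemma mem_reusable {p : V} {x : ℕ} : x ∈ R.reusable p ↔
    (∃ s ∈ R.children (R.parent p), R.Beats p s ∧ R.color (R.parent p) s = x) ∨
    (R.parent p ≠ R.root ∧ R.numReused (R.parent p) ≤ R.rank p ∧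
      R.color (R.parent (R.parent p)) (R.parent p) = x) := by
  simp only [reusable, mem_union, mem_image, mem_filter, and_assoc]
  split_ifs with h
  · simp [h, eq_comm]
  · simp only [notMem_empty, or_false, iff_self_or]
    exact fun h' => absurd ⟨h'.1, h'.2.1⟩ h

lemma rank_sub_numReused_lt {p z : V} (hz : z ∈ R.children p) (hm : R.numReused p ≤ R.rank z) :
    R.rank z - R.numReused p < #(Icc 1 R.numColors \ R.colorsAt (R.parent p)) := by
  have := rank_lt hz
  have := le_card_sdiff (R.colorsAt (R.parent p)) (Icc 1 R.numColors)
  have := card_colorsAt_le (R := R) (R.parent p)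
  rw [Nat.card_Icc] at *
  unfold numReused at hm ⊢
  omega

lemma color_mem_fresh {p z : V} (hp : p ≠ R.root) (hz : z ∈ R.children p)
    (hm : R.numReused p ≤ R.rank z) :
    R.color p z ∈ Icc 1 R.numColors \ R.colorsAt (R.parent p) := by
  rw [color_of_ne_root R hp, if_pos hm]
  exact nth_mem_of_lt_card (rank_sub_numReused_lt hz hm)

lemma card_filter_beats {p : V} (hp : p ≠ R.root) :
    #{s ∈ R.children (R.parent p) | R.Beats p s} =
      if 2 * R.rank p < #(R.children (R.parent p)) then #(R.children (R.parent p)) / 2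
      else (#(R.children (R.parent p)) - 1) / 2 := by
  rw [← card_cyclicBeats (rank_lt (self_mem_children hp))]
  exact card_filter_rank (R.parent p) _

lemma card_reusable {p : V} (hg : R.ProperAt (R.parent p)) :
    #(R.reusable p) = #{s ∈ R.children (R.parent p) | R.Beats p s} +
      if R.parent p ≠ R.root ∧ R.numReused (R.parent p) ≤ R.rank p then 1 else 0 := by
  rw [reusable, card_union_of_disjoint, card_image_of_injOn (hg.injOn.mono (filter_subset _ _))]
  · split_ifs <;> simp
  · split_ifs with h
    · refine disjoint_singleton_right.2 fun hmem => ?_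
      obtain ⟨s, hs, heq⟩ := mem_image.1 hmem
      exact hg.color_ne_up h.1 s (mem_filter.1 hs).1 heq
    · exact disjoint_empty_right _

lemma numReused_le_card_reusable {p : V} (hp : p ≠ R.root) (hg : R.ProperAt (R.parent p)) :
    R.numReused p ≤ #(R.reusable p) := by
  rw [card_reusable hg, card_filter_beats hp]
  have := rank_lt (self_mem_children hp)
  have := R.degree_le p
  have := R.degree_le (R.parent p)
  have := R.degree_le (R.parent (R.parent p))
  unfold numReused numColors ParentTree.degree at *
  -- Tight only when `parent p ≠ root` has an even number `Δ - 1` of children; then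
  -- `2 * rank p < Δ - 1`, or else `numReused (parent p) ≤ (Δ - 1) / 2 ≤ rank p`.
  by_cases hgr : R.parent p = R.root <;> simp only [hgr, hp, ne_eq, not_true_eq_false,
    not_false_eq_true, true_and, false_and, if_false, if_true] at * <;> split_ifs at * <;> omega

lemma color_mem_reusable {p z : V} (hp : p ≠ R.root) (hg : R.ProperAt (R.parent p))
    (hm : R.rank z < R.numReused p) : R.color p z ∈ R.reusable p := by
  rw [color_of_ne_root R hp, if_neg hm.not_ge]
  exact nth_mem_of_lt_card (hm.trans_le (numReused_le_card_reusable hp hg))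

lemma color_parent_not_mem_reusable {p : V} (hp : p ≠ R.root) (hg : R.ProperAt (R.parent p)) :
    R.color (R.parent p) p ∉ R.reusable p := by
  intro h
  rcases mem_reusable.1 h with ⟨s, hs, hbeats, heq⟩ | ⟨hg', -, heq⟩
  · obtain rfl := hg.injOn hs (self_mem_children hp) heq
    exact not_cyclicBeats_self _ _ hbeats
  · exact hg.color_ne_up hg' p (self_mem_children hp) heq.symm

lemma properAt_root : R.ProperAt R.root := by
  have hlt : ∀ z ∈ R.children R.root, R.rank z < #(Icc 1 R.numColors) := fun z hz => by
    have := rank_lt hz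
    have := R.degree_le R.root
    simp only [ParentTree.degree, if_true, Nat.card_Icc, numColors] at *
    omega
  refine ⟨?_, fun z hz z' hz' h => ?_, fun h => absurd rfl h⟩
  · simp only [colorsAt, if_true, union_empty, image_subset_iff, color_root]
    exact fun z hz => nth_mem_of_lt_card (hlt z hz)
  · rw [color_root, color_root] at h
    exact rank_injOn _ hz hz' (nth_injOn _ (hlt z hz) (hlt z' hz') h)

lemma injOn_color_of_parent {p : V} (hp : p ≠ R.root) (hg : R.ProperAt (R.parent p)) :
    Set.InjOn (R.color p) (R.children p) := by
  have hsep : ∀ {z z'}, z ∈ R.children p → R.numReused p ≤ R.rank z →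
      R.rank z' < R.numReused p → R.color p z ≠ R.color p z' := fun hz hm hm' h =>
    (mem_sdiff.1 (color_mem_fresh hp hz hm)).2
      (h ▸ reusable_subset_colorsAt p (color_mem_reusable hp hg hm'))
  intro z hz z' hz' h
  apply rank_injOn p hz hz'
  rcases le_or_gt (R.numReused p) (R.rank z) with hm | hm <;>
    rcases le_or_gt (R.numReused p) (R.rank z') with hm' | hm'
  · rw [color_of_ne_root R hp, color_of_ne_root R hp, if_pos hm, if_pos hm'] at h
    have := nth_injOn _ (rank_sub_numReused_lt hz hm) (rank_sub_numReused_lt hz' hm') h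
    omega
  · exact absurd h (hsep hz hm hm')
  · exact absurd h.symm (hsep hz' hm' hm)
  · rw [color_of_ne_root R hp, color_of_ne_root R hp, if_neg hm.not_ge, if_neg hm'.not_ge] at h
    have hc := numReused_le_card_reusable hp hg
    exact nth_injOn _ (hm.trans_le hc) (hm'.trans_le hc) h

lemma properAt_of_parent {p : V} (hp : p ≠ R.root) (hg : R.ProperAt (R.parent p)) :
    R.ProperAt p := by
  refine ⟨fun x hx => ?_, injOn_color_of_parent hp hg, fun _ z hz h => ?_⟩
  · rcases mem_union.1 hx with hx | hx
    · obtain ⟨z, hz, rfl⟩ := mem_image.1 hx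
      rcases le_or_gt (R.numReused p) (R.rank z) with hm | hm
      · exact (mem_sdiff.1 (color_mem_fresh hp hz hm)).1
      · exact hg.colorsAt_subset (reusable_subset_colorsAt p (color_mem_reusable hp hg hm))
    · rw [if_neg hp, mem_singleton] at hx
      exact hx ▸ hg.colorsAt_subset (color_mem_colorsAt (self_mem_children hp))
  · rcases le_or_gt (R.numReused p) (R.rank z) with hm | hm
    · exact (mem_sdiff.1 (color_mem_fresh hp hz hm)).2
        (h ▸ color_mem_colorsAt (self_mem_children hp))
    · exact color_parent_not_mem_reusable hp hg (h ▸ color_mem_reusable hp hg hm)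

theorem properAt (p : V) : R.ProperAt p := by
  induction hd : R.depth p using Nat.strong_induction_on generalizing p with
  | _ n ih =>
    by_cases hp : p = R.root
    · exact hp ▸ properAt_root
    · exact properAt_of_parent hp (ih _ (hd ▸ R.depth_parent_lt hp) _ rfl)

lemma color_fresh_or_mem_reusable {p z : V} (hp : p ≠ R.root) (hz : z ∈ R.children p) :
    R.color p z ∉ R.colorsAt (R.parent p) ∨ R.color p z ∈ R.reusable p := by
  rcases le_or_gt (R.numReused p) (R.rank z) with hm | hm
  · exact Or.inl (mem_sdiff.1 (color_mem_fresh hp hz hm)).2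
  · exact Or.inr (color_mem_reusable hp (properAt _) hm)

lemma min_le_card_fresh {v : V} (hv : v ≠ R.root) :
    min #(R.children v) (R.Δ / 2) ≤
      #{z ∈ R.children v | R.color v z ∉ R.colorsAt (R.parent v)} := by
  calc min #(R.children v) (R.Δ / 2) ≤ #(R.children v) - R.numReused v := by
        have := R.degree_le (R.parent v)
        unfold numReused numColors
        omega
    _ = #{z ∈ R.children v | R.numReused v ≤ R.rank z} := by
        rw [card_filter_rank, ← Nat.card_Ico]
        congr 1
        ext j
        simp [and_comm]
    _ ≤ _ := card_le_card fun z hz => by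
        rw [mem_filter] at hz ⊢
        exact ⟨hz.1, (mem_sdiff.1 (color_mem_fresh hv hz.1 hz.2)).2⟩

lemma not_bicolored_ascending {a b c d e : V} (ha : a ∈ R.children b) (hb : b ∈ R.children c)
    (hc : c ∈ R.children d) (hd : d ∈ R.children e) :
    ¬ (R.color d c = R.color b a ∧ R.color e d = R.color c b) := by
  obtain ⟨hbr, rfl⟩ := mem_children.1 hb
  obtain ⟨hcr, rfl⟩ := mem_children.1 hc
  obtain ⟨hdr, rfl⟩ := mem_children.1 hd
  rintro ⟨h₁, h₂⟩
  rcases color_fresh_or_mem_reusable hbr ha with hfresh | hmem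
  · exact hfresh (h₁ ▸ color_parent_mem_colorsAt hcr)
  rcases mem_reusable.1 hmem with ⟨s, hs, -, heq⟩ | ⟨-, hm, -⟩
  · exact (properAt _).color_ne_up hcr s hs (heq.trans h₁.symm)
  · exact (mem_sdiff.1 (color_mem_fresh hcr hb hm)).2 (h₂ ▸ color_parent_mem_colorsAt hdr)

lemma not_bicolored_apex_end {a b c d e : V} (ha : a ∈ R.children b) (hc : c ∈ R.children b)
    (hd : d ∈ R.children c) (he : e ∈ R.children d) :
    ¬ (R.color c d = R.color b a ∧ R.color d e = R.color b c) := by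
  obtain ⟨hdr, rfl⟩ := mem_children.1 hd
  obtain ⟨hcr, rfl⟩ := mem_children.1 hc
  rintro ⟨h₁, h₂⟩
  rcases color_fresh_or_mem_reusable hdr he with hfresh | hmem
  · exact hfresh (h₂ ▸ color_parent_mem_colorsAt hcr)
  rcases mem_reusable.1 hmem with ⟨s, hs, -, heq⟩ | ⟨-, hm, -⟩
  · exact (properAt _).color_ne_up hcr s hs (heq.trans h₂)
  · exact (mem_sdiff.1 (color_mem_fresh hcr hd hm)).2 (h₁ ▸ color_mem_colorsAt ha)

lemma beats_of_color_eq {a b c d : V} (ha : a ∈ R.children b) (hb : b ∈ R.children c)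
    (hd : d ∈ R.children c) (h : R.color b a = R.color c d) : R.Beats b d := by
  obtain ⟨hbr, rfl⟩ := mem_children.1 hb
  rcases color_fresh_or_mem_reusable hbr ha with hfresh | hmem
  · exact absurd (h ▸ color_mem_colorsAt hd) hfresh
  rcases mem_reusable.1 hmem with ⟨s, hs, hbeats, heq⟩ | ⟨hcr, -, heq⟩
  · rwa [(properAt _).injOn hs hd (heq.trans h)] at hbeats
  · exact absurd (heq.trans h).symm ((properAt _).color_ne_up hcr d hd)

lemma not_bicolored_apex_middle {a b c d e : V} (ha : a ∈ R.children b) (hb : b ∈ R.children c)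
    (hd : d ∈ R.children c) (he : e ∈ R.children d) :
    ¬ (R.color b a = R.color c d ∧ R.color c b = R.color d e) := by
  rintro ⟨h₁, h₂⟩
  have hbd := beats_of_color_eq ha hb hd h₁
  have hdb := beats_of_color_eq he hd hb h₂.symm
  unfold Beats at hbd hdb
  rw [(mem_children.1 hb).2] at hbd
  rw [(mem_children.1 hd).2] at hdb
  exact hbd.not_cyclicBeats hdb

lemma edgeColor_parent_child {a b : V} (h : b ∈ R.children a) :
    R.edgeColor s(a, b) = R.color a b := by
  simp [edgeColor, h]

lemma edgeColor_child_parent {a b : V} (h : a ∈ R.children b) :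
    R.edgeColor s(a, b) = R.color b a := by
  rw [Sym2.eq_swap, edgeColor_parent_child h]

lemma edgeColor_mem_colorsAt {g u : V} (h : R.graph.Adj g u) :
    R.edgeColor s(g, u) ∈ R.colorsAt g := by
  rcases graph_adj.1 h with hg | hu
  · obtain ⟨hgr, rfl⟩ := mem_children.1 hg
    rw [edgeColor_child_parent hg]
    exact color_parent_mem_colorsAt hgr
  · rw [edgeColor_parent_child hu]
    exact color_mem_colorsAt hu

lemma edgeColor_mem_Icc (e : Sym2 V) (he : e ∈ R.graph.edgeSet) :
    R.edgeColor e ∈ Icc 1 R.numColors := by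
  induction e using Sym2.ind with
  | h a b => exact (properAt a).colorsAt_subset (edgeColor_mem_colorsAt he)

lemma edgeColor_ne_of_fresh {v z u : V} (hz : z ∈ R.children v)
    (hfresh : R.color v z ∉ R.colorsAt (R.parent v)) (hu : R.graph.Adj (R.parent v) u) :
    R.edgeColor s(R.parent v, u) ≠ R.edgeColor s(v, z) := by
  rw [edgeColor_parent_child hz]
  exact fun h => hfresh (h ▸ edgeColor_mem_colorsAt hu)

lemma edgeColor_ne {x y z : V} (hy : R.graph.Adj x y) (hz : R.graph.Adj x z) (hyz : y ≠ z) :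
    R.edgeColor s(x, y) ≠ R.edgeColor s(x, z) := by
  rcases graph_adj.1 hy with hx | hy <;> rcases graph_adj.1 hz with hx' | hz
  · exact absurd (eq_of_mem_children hx hx') hyz
  · obtain ⟨hxr, rfl⟩ := mem_children.1 hx
    rw [edgeColor_child_parent hx, edgeColor_parent_child hz]
    exact ((properAt x).color_ne_up hxr z hz).symm
  · obtain ⟨hxr, rfl⟩ := mem_children.1 hx'
    rw [edgeColor_parent_child hy, edgeColor_child_parent hx']
    exact (properAt x).color_ne_up hxr y hy
  · rw [edgeColor_parent_child hy, edgeColor_parent_child hz]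
    exact fun h => hyz ((properAt x).injOn hy hz h)

lemma not_bicolored_path {a b c d e : V} (hab : R.graph.Adj a b) (hbc : R.graph.Adj b c)
    (hcd : R.graph.Adj c d) (hde : R.graph.Adj d e) (hac : a ≠ c) (hbd : b ≠ d) (hce : c ≠ e) :
    ¬ (R.edgeColor s(a, b) = R.edgeColor s(c, d) ∧
      R.edgeColor s(b, c) = R.edgeColor s(d, e)) := by
  rcases graph_adj.1 hab with hab | hba <;> rcases graph_adj.1 hbc with hbc | hcb <;>
    rcases graph_adj.1 hcd with hcd | hdc <;> rcases graph_adj.1 hde with hde | hed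
  -- A step down followed by a step up would revisit the parent.
  all_goals first
    | exact absurd (eq_of_mem_children hba hbc) hac
    | exact absurd (eq_of_mem_children hcb hcd) hbd
    | exact absurd (eq_of_mem_children hdc hde) hce
    | simp only [edgeColor_child_parent, edgeColor_parent_child, *]
  · exact fun h => not_bicolored_ascending hab hbc hcd hde ⟨h.1.symm, h.2.symm⟩
  · exact fun h => not_bicolored_apex_end hed hcd hbc hab ⟨h.2, h.1⟩
  · exact not_bicolored_apex_middle hab hbc hdc hed
  · exact fun h => not_bicolored_apex_end hab hcb hdc hed ⟨h.1.symm, h.2.symm⟩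
  · exact fun h => not_bicolored_ascending hed hdc hcb hba ⟨h.2, h.1⟩

theorem isStarEdgeColoring : IsStarEdgeColoring R.graph R.edgeColor := by
  have hpath : ∀ {a b c}, R.graph.Adj a b → R.graph.Adj b c → a ≠ c →
      R.edgeColor s(a, b) ≠ R.edgeColor s(b, c) := fun {a _ _} hab hbc hac => by
    rw [Sym2.eq_swap (a := a)]
    exact edgeColor_ne hab.symm hbc hac
  refine ⟨?_, fun v hv hadj => ?_, fun v hv hadj => absurd hadj (not_adj_cycle_four hv)⟩
  · rintro e₁ he₁ e₂ he₂ hne ⟨x, hx₁, hx₂⟩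
    obtain ⟨y, rfl⟩ := Sym2.mem_iff_exists.1 hx₁
    obtain ⟨z, rfl⟩ := Sym2.mem_iff_exists.1 hx₂
    exact edgeColor_ne he₁ he₂ (by rintro rfl; exact hne rfl)
  · have hne : ∀ i j : Fin 5, i ≠ j → v i ≠ v j := fun i j h => hv.ne h
    exact three_le_card_image_fin_four (hpath (hadj 0) (hadj 1) (hne 0 2 (by decide)))
      (hpath (hadj 1) (hadj 2) (hne 1 3 (by decide)))
      (hpath (hadj 2) (hadj 3) (hne 2 4 (by decide)))
      (not_bicolored_path (hadj 0) (hadj 1) (hadj 2) (hadj 3) (hne 0 2 (by decide))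
        (hne 1 3 (by decide)) (hne 2 4 (by decide)))

end BoundedParentTree

namespace SimpleGraph.IsTree

variable {V : Type*} {T : SimpleGraph V}

lemma exists_adj_dist_add_one (hT : T.IsTree) (r : V) {v : V} (hv : v ≠ r) :
    ∃ p, T.Adj v p ∧ T.dist p r + 1 = T.dist v r := by
  obtain ⟨w, -, hw⟩ := hT.connected.exists_path_of_dist v r
  cases w with
  | nil => exact absurd rfl hv
  | @cons _ p _ hvp q =>
    refine ⟨p, hvp, ?_⟩
    have := dist_le q
    have := hT.dist_eq_dist_add_one_of_adj r hvp
    rw [Walk.length_cons] at hw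
    rw [dist_comm (u := r), dist_comm (u := r)] at this
    omega

lemma eq_of_adj_of_dist_add_one (hT : T.IsTree) (r : V) {v p p' : V} (hp : T.Adj v p)
    (hp' : T.Adj v p') (hd : T.dist p r + 1 = T.dist v r) (hd' : T.dist p' r + 1 = T.dist v r) :
    p = p' := by
  classical
  have key : ∀ {p}, T.Adj v p → T.dist p r + 1 = T.dist v r →
      ∃ w : T.Walk v r, w.IsPath ∧ w.getVert 1 = p := fun {p} hvp hd => by
    obtain ⟨q, hq, hlen⟩ := hT.connected.exists_path_of_dist p r
    refine ⟨.cons hvp q, hq.cons fun hv => ?_, by simp⟩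
    have := dist_le (q.dropUntil v hv)
    have := q.length_dropUntil_le_length hv
    omega
  obtain ⟨w, hw, rfl⟩ := key hp hd
  obtain ⟨w', hw', rfl⟩ := key hp' hd'
  rw [(hT.existsUnique_path v r).unique hw hw']

lemma exists_boundedParentTree [Fintype V] [DecidableEq V] (hT : T.IsTree) (r : V) {Δ : ℕ}
    (hΔ : ∀ v, (T.neighborSet v).ncard ≤ Δ) :
    ∃ R : BoundedParentTree V,
      R.graph = T ∧ R.root = r ∧ R.Δ = Δ ∧ ∀ v, R.depth v = T.dist v r := by
  choose! par hpar using fun v (hv : v ≠ r) => hT.exists_adj_dist_add_one r hv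
  let R₀ : ParentTree V := ⟨par, r, (T.dist · r), fun v hv => (hpar v hv).2⟩
  have hgraph : R₀.graph = T := by
    ext a b
    rw [ParentTree.graph_adj, ParentTree.mem_children, ParentTree.mem_children]
    refine ⟨?_, fun h => ?_⟩
    · rintro (⟨ha, rfl⟩ | ⟨hb, rfl⟩)
      exacts [(hpar a ha).1, (hpar b hb).1.symm]
    · have hd := hT.dist_eq_dist_add_one_of_adj r h
      rw [dist_comm (u := r), dist_comm (u := r)] at hd
      rcases hd with hd | hd
      · have ha : a ≠ r := by rintro rfl; simp at hd
        exact Or.inl ⟨ha, hT.eq_of_adj_of_dist_add_one r (hpar a ha).1 h (hpar a ha).2 hd.symm⟩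
      · have hb : b ≠ r := by rintro rfl; simp at hd
        exact Or.inr
          ⟨hb, hT.eq_of_adj_of_dist_add_one r (hpar b hb).1 h.symm (hpar b hb).2 hd.symm⟩
  refine ⟨{ R₀ with Δ, degree_le := fun v => ?_ }, hgraph, rfl, rfl, fun _ => rfl⟩
  rw [← ParentTree.ncard_neighborSet_graph, hgraph]
  exact hΔ v

end SimpleGraph.IsTree

theorem exists_star_edge_coloring_rooted_tree_general {V : Type*} [Fintype V]
    (T : SimpleGraph V) (hT : T.IsTree) (Δ : ℕ)
    (hΔle : ∀ v : V, (T.neighborSet v).ncard ≤ Δ)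
    (r : V) :
    ∃ c : Sym2 V → ℕ,
      (∀ e ∈ T.edgeSet, 1 ≤ c e ∧ c e ≤ 3 * Δ / 2) ∧
      IsStarEdgeColoring T c ∧
      ∀ v p : V, v ≠ r → (T.neighborSet v).ncard ≠ 1 →
        T.Adj v p → T.dist p r + 1 = T.dist v r →
        min ((T.neighborSet v).ncard - 1) (Δ / 2) ≤
          ({w | T.Adj v w ∧ T.dist w r = T.dist v r + 1 ∧
              ∀ u : V, T.Adj p u → c s(p, u) ≠ c s(v, w)}).ncard := by
  classical
  obtain ⟨R, rfl, rfl, rfl, hdepth⟩ := hT.exists_boundedParentTree r hΔle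
  refine ⟨R.edgeColor, fun e he => Finset.mem_Icc.1 (R.edgeColor_mem_Icc e he),
    R.isStarEdgeColoring, fun v p hv _ hvp hpv => ?_⟩
  simp only [← hdepth] at hpv ⊢
  obtain rfl : p = R.parent v := ParentTree.eq_of_mem_children
    (ParentTree.mem_children_of_adj_of_depth_le hvp (by omega)) (ParentTree.self_mem_children hv)
  calc min ((R.graph.neighborSet v).ncard - 1) (R.Δ / 2)
      = min (R.children v).card (R.Δ / 2) := by
        rw [ParentTree.ncard_neighborSet_graph, ParentTree.degree, if_neg hv, Nat.add_sub_cancel]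
    _ ≤ ({z ∈ R.children v | R.color v z ∉ R.colorsAt (R.parent v)} : Finset V).card :=
        R.min_le_card_fresh hv
    _ ≤ _ := by
        rw [← Set.ncard_coe_finset]
        refine Set.ncard_le_ncard (fun z hz => ?_) (Set.toFinite _)
        rw [Finset.mem_coe, Finset.mem_filter] at hz
        exact ⟨ParentTree.graph_adj.2 (Or.inr hz.1), (ParentTree.depth_of_mem_children hz.1).symm,
          fun u hu => R.edgeColor_ne_of_fresh hz.1 hz.2 hu⟩

/-- Let `T` be a tree with maximum degree `Δ ≥ 1`, rooted at `r`.
Then `T` has a star edge coloring with colors from `{1, …, ⌊3Δ/2⌋}` such that for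
every non-root non-leaf vertex `v` with parent `p` (the neighbor of `v` closer to
the root), at least `min (deg v − 1) ⌊Δ/2⌋` of the edges from `v` to its children
(the neighbors of `v` farther from the root) receive colors that do not appear on
any edge incident to `p`. -/
theorem exists_star_edge_coloring_rooted_tree {V : Type*} [Fintype V]
    (T : SimpleGraph V) (hT : T.IsTree) (Δ : ℕ) (hΔpos : 1 ≤ Δ)
    (hΔle : ∀ v : V, (T.neighborSet v).ncard ≤ Δ)
    (hΔmax : ∃ v : V, (T.neighborSet v).ncard = Δ)
    (r : V) :
    ∃ c : Sym2 V → ℕ,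
      (∀ e ∈ T.edgeSet, 1 ≤ c e ∧ c e ≤ 3 * Δ / 2) ∧
      IsStarEdgeColoring T c ∧
      ∀ v p : V, v ≠ r → (T.neighborSet v).ncard ≠ 1 →
        T.Adj v p → T.dist p r + 1 = T.dist v r →
        min ((T.neighborSet v).ncard - 1) (Δ / 2) ≤
          ({w | T.Adj v w ∧ T.dist w r = T.dist v r + 1 ∧
              ∀ u : V, T.Adj p u → c s(p, u) ≠ c s(v, w)}).ncard :=
  exists_star_edge_coloring_rooted_tree_general T hT Δ hΔle r
end
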